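/- arXiv:2105.02768 — 7 statements merged into one kernel-verified Lean document; each statement's English description precedes it below -/
import Mathlib

section
/- Let G be a (discrete) group, let m be a mean on ℓ∞(G) satisfying m(𝟙_F) = 0 for every finite F ⊆ G, and let x ∈ G with x ≠ e. Then m lies in the weak-* closure of the set of means μ_S with S a finite nonempty subset of G satisfying S ∩ xS = ∅; precisely, for every finite family Φ ⊆ ℓ∞(G) and every ε > 0 there exists a finite nonempty S ⊆ G with S ∩ xS = ∅ and |m(f) − (1/#S)·∑_{s∈S} f(s)| < ε for all f ∈ Φ. -/
/-!
Quantize the finitely many test functions: the level sets of `g ↦ (⌊f g / δ⌋)_{f ∈ Φ}` form a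
finite partition of `G` on each piece of which every `f ∈ Φ` varies by at most `δ`. Two means
giving almost the same weights to the pieces are then close on `Φ`. The weights `α_v` of `m`
are approximated by proportions `k_v / ∑ k`, and a piece of positive weight is infinite because
`m` kills finite sets. So one can pick greedily `k_v` points in each piece, avoiding at each step
the finitely many points `y` with `y`, `x y` or `x⁻¹ y` already chosen; the uniform mean `μ_S` on
the chosen set `S` gives the pieces the weights `k_v / ∑ k`, and `S ∩ xS = ∅`.
-/

/-- A mean on `ℓ∞(G)` (realized as `lp (fun _ : G => ℝ) ⊤`, the bounded real-valued
functions on `G`): a positive unital linear functional. -/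
def IsDiscreteMean {G : Type*} (m : lp (fun _ : G => ℝ) ⊤ →ₗ[ℝ] ℝ) : Prop :=
  (∀ f : lp (fun _ : G => ℝ) ⊤, (∀ x, 0 ≤ f x) → 0 ≤ m f) ∧
  (∀ f : lp (fun _ : G => ℝ) ⊤, (∀ x, f x = 1) → m f = 1)

open Finset

section Means

variable {G : Type*}

noncomputable def indicatorLp (A : Set G) : lp (fun _ : G => ℝ) ⊤ :=
  ⟨A.indicator 1, memℓp_infty ⟨1, by
    rintro _ ⟨g, rfl⟩
    by_cases hg : g ∈ A <;> simp [hg]⟩⟩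

@[simp]
lemma indicatorLp_apply (A : Set G) (g : G) : indicatorLp A g = A.indicator 1 g := rfl

noncomputable def finsetMean (S : Finset G) : lp (fun _ : G => ℝ) ⊤ →ₗ[ℝ] ℝ :=
  (#S : ℝ)⁻¹ • ∑ s ∈ S, lp.evalₗ (fun _ : G => ℝ) ⊤ s

@[simp]
lemma finsetMean_apply (S : Finset G) (f : lp (fun _ : G => ℝ) ⊤) :
    finsetMean S f = (#S : ℝ)⁻¹ * ∑ s ∈ S, f s := by
  simp [finsetMean]

lemma isDiscreteMean_finsetMean {S : Finset G} (hS : S.Nonempty) :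
    IsDiscreteMean (finsetMean S) := by
  refine ⟨fun f hf => ?_, fun f hf => ?_⟩
  · rw [finsetMean_apply]
    exact mul_nonneg (by positivity) (sum_nonneg fun s _ => hf s)
  · simp [hf, hS.card_ne_zero]

lemma finsetMean_indicatorLp (S : Finset G) (A : Set G) [DecidablePred (· ∈ A)] :
    finsetMean S (indicatorLp A) = #{s ∈ S | s ∈ A} / #S := by
  simp [Set.indicator_apply, sum_boole, div_eq_inv_mul]

variable {m : lp (fun _ : G => ℝ) ⊤ →ₗ[ℝ] ℝ}

lemma infinite_of_apply_indicatorLp_ne_zero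
    (hvanish : ∀ F : Finset G, ∀ f : lp (fun _ : G => ℝ) ⊤,
      (∀ y, f y = Set.indicator (F : Set G) (fun _ => (1 : ℝ)) y) → m f = 0)
    {A : Set G} (hA : m (indicatorLp A) ≠ 0) : A.Infinite := fun hfin =>
  hA (hvanish hfin.toFinset _ fun _ => by rw [indicatorLp_apply, hfin.coe_toFinset]; rfl)

lemma IsDiscreteMean.abs_apply_le (hm : IsDiscreteMean m) {u : lp (fun _ : G => ℝ) ⊤} {δ : ℝ}
    (hu : ∀ g, |u g| ≤ δ) : |m u| ≤ δ := by
  have hδ : m (δ • 1) = δ := by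
    rw [map_smul, hm.2 1 fun _ => rfl, smul_eq_mul, mul_one]
  have hle : 0 ≤ m (δ • 1 - u) := hm.1 _ fun g => by
    rw [lp.coeFn_sub, lp.coeFn_smul, lp.infty_coeFn_one]
    simpa using (abs_le.mp (hu g)).2
  have hge : 0 ≤ m (δ • 1 + u) := hm.1 _ fun g => by
    rw [lp.coeFn_add, lp.coeFn_smul, lp.infty_coeFn_one]
    simpa [neg_le_iff_add_nonneg'] using (abs_le.mp (hu g)).1
  rw [map_sub, hδ] at hle
  rw [map_add, hδ] at hge
  exact abs_le.mpr ⟨by linarith, by linarith⟩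

variable {ι : Type*} (φ : G → ι) (V : Finset ι) (hV : ∀ g, φ g ∈ V)
include hV

lemma sum_smul_indicatorLp_fiber_apply (c : ι → ℝ) (g : G) :
    (∑ v ∈ V, c v • indicatorLp (φ ⁻¹' {v})) g = c (φ g) := by
  classical
  rw [lp.coeFn_sum, Finset.sum_apply]
  simp [Set.indicator_apply, hV]

lemma IsDiscreteMean.abs_sub_sum_le (hm : IsDiscreteMean m) (c : ι → ℝ)
    {f : lp (fun _ : G => ℝ) ⊤} {δ : ℝ} (hf : ∀ g, |f g - c (φ g)| ≤ δ) :
    |m f - ∑ v ∈ V, c v * m (indicatorLp (φ ⁻¹' {v}))| ≤ δ := by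
  have := hm.abs_apply_le (u := f - ∑ v ∈ V, c v • indicatorLp (φ ⁻¹' {v})) fun g => by
    rw [lp.coeFn_sub, Pi.sub_apply, sum_smul_indicatorLp_fiber_apply φ V hV]
    exact hf g
  simpa only [map_sub, map_sum, map_smul, smul_eq_mul] using this

lemma IsDiscreteMean.sum_apply_indicatorLp_fiber (hm : IsDiscreteMean m) :
    ∑ v ∈ V, m (indicatorLp (φ ⁻¹' {v})) = 1 := by
  have := hm.abs_sub_sum_le φ V hV (fun _ => 1) (f := 1) (δ := 0) fun g => by
    simp [lp.infty_coeFn_one]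
  rw [hm.2 1 fun _ => rfl] at this
  simp only [one_mul, abs_nonpos_iff, sub_eq_zero] at this
  exact this.symm

lemma IsDiscreteMean.abs_apply_sub_apply_le {m' : lp (fun _ : G => ℝ) ⊤ →ₗ[ℝ] ℝ}
    (hm : IsDiscreteMean m) (hm' : IsDiscreteMean m') (c : ι → ℝ) {f : lp (fun _ : G => ℝ) ⊤}
    {δ η : ℝ} (hf : ∀ g, |f g - c (φ g)| ≤ δ)
    (hη : ∀ v ∈ V, |m (indicatorLp (φ ⁻¹' {v})) - m' (indicatorLp (φ ⁻¹' {v}))| ≤ η) :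
    |m f - m' f| ≤ 2 * δ + η * ∑ v ∈ V, |c v| := by
  set α := fun v => m (indicatorLp (φ ⁻¹' {v}))
  set β := fun v => m' (indicatorLp (φ ⁻¹' {v}))
  have hαβ : |∑ v ∈ V, c v * α v - ∑ v ∈ V, c v * β v| ≤ η * ∑ v ∈ V, |c v| := by
    rw [← sum_sub_distrib, mul_sum]
    refine (abs_sum_le_sum_abs _ _).trans (sum_le_sum fun v hv => ?_)
    rw [← mul_sub, abs_mul, mul_comm η]
    exact mul_le_mul_of_nonneg_left (hη v hv) (abs_nonneg _)
  have h := hm.abs_sub_sum_le φ V hV c hf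
  have h' := hm'.abs_sub_sum_le φ V hV c hf
  rw [abs_sub_comm] at h'
  linarith [abs_sub_le (m f) (∑ v ∈ V, c v * α v) (m' f),
    abs_sub_le (∑ v ∈ V, c v * α v) (∑ v ∈ V, c v * β v) (m' f)]

end Means

lemma exists_nat_div_sum_near {ι : Type*} (V : Finset ι) (α : ι → ℝ) (hα0 : ∀ v, 0 ≤ α v)
    (hα1 : ∑ v ∈ V, α v = 1) {η : ℝ} (hη : 0 < η) :
    ∃ k : ι → ℕ, (∀ v, α v = 0 → k v = 0) ∧ 0 < ∑ v ∈ V, k v ∧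
      ∀ v ∈ V, |(k v : ℝ) / (∑ w ∈ V, k w : ℕ) - α v| ≤ η := by
  obtain ⟨N, hN⟩ := exists_nat_gt ((1 + #V) / η)
  have hN0 : (0 : ℝ) < N := lt_of_le_of_lt (by positivity) hN
  set k : ι → ℕ := fun v => ⌈N * α v⌉₊
  have hk_ge : ∀ v, N * α v ≤ k v := fun v => Nat.le_ceil _
  have hk_lt : ∀ v, (k v : ℝ) < N * α v + 1 := fun v =>
    Nat.ceil_lt_add_one (mul_nonneg hN0.le (hα0 v))
  set M := ∑ v ∈ V, k v
  have hNM : (N : ℝ) ≤ M := by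
    calc (N : ℝ) = ∑ v ∈ V, N * α v := by rw [← mul_sum, hα1, mul_one]
      _ ≤ M := by push_cast [M]; exact sum_le_sum fun v _ => hk_ge v
  have hMN : (M : ℝ) ≤ N + #V := by
    calc (M : ℝ) ≤ ∑ v ∈ V, (N * α v + 1) := by
          push_cast [M]; exact sum_le_sum fun v _ => (hk_lt v).le
      _ = N + #V := by rw [sum_add_distrib, ← mul_sum, hα1]; simp
  have hM0 : (0 : ℝ) < M := hN0.trans_le hNM
  refine ⟨k, fun v hv => by simp [k, hv], by exact_mod_cast hM0, fun v hv => ?_⟩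
  have hα_le : α v ≤ 1 := hα1 ▸ single_le_sum (fun w _ => hα0 w) hv
  have hNη : 1 + #V ≤ η * N := by rw [div_lt_iff₀ hη] at hN; linarith
  rw [div_sub' hM0.ne', abs_div, abs_of_pos hM0, div_le_iff₀ hM0]
  refine abs_le.mpr ⟨?_, ?_⟩ <;> nlinarith [hk_ge v, hk_lt v, hα0 v]

section Selection

variable {G : Type*} [Group G] {x : G}

def IsTranslateFree (x : G) (S : Finset G) : Prop := ∀ s ∈ S, x * s ∉ S

lemma IsTranslateFree.exists_insert [DecidableEq G] (hx : x ≠ 1) {A : Set G} (hA : A.Infinite)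
    {S : Finset G} (hS : IsTranslateFree x S) :
    ∃ a ∈ A, a ∉ S ∧ IsTranslateFree x (insert a S) := by
  obtain ⟨a, haA, hab⟩ :=
    (hA.sdiff (S ∪ S.image (x * ·) ∪ S.image (x⁻¹ * ·)).finite_toSet).nonempty
  simp only [coe_union, coe_image, Set.mem_union, Set.mem_image, mem_coe, not_or,
    not_exists, not_and] at hab
  obtain ⟨⟨haS, hxS⟩, hxiS⟩ := hab
  refine ⟨a, haA, haS, fun s hs => ?_⟩
  rw [mem_insert] at hs ⊢
  rintro (h | h) <;> rcases hs with rfl | hs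
  · exact hx (mul_eq_right.mp h)
  · exact hxS s hs h
  · exact hxiS _ h (by group)
  · exact hS s hs h

lemma exists_injOn_isTranslateFree [DecidableEq G] (hx : x ≠ 1) {ι : Type*}
    (A : ι → Set G) (I : Finset ι) (hA : ∀ i ∈ I, (A i).Infinite) :
    ∃ t : ι → G, Set.InjOn t I ∧ (∀ i ∈ I, t i ∈ A i) ∧ IsTranslateFree x (I.image t) := by
  classical
  induction I using Finset.induction_on with
  | empty => exact ⟨fun _ => 1, by simp, by simp, by simp [IsTranslateFree]⟩
  | insert a I ha ih =>
    obtain ⟨t, ht_inj, ht_mem, ht_free⟩ := ih fun i hi => hA i (mem_insert_of_mem hi)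
    obtain ⟨s, hsA, hsS, hs_free⟩ := ht_free.exists_insert hx (hA a (mem_insert_self a I))
    have heq : Set.EqOn (Function.update t a s) t I := fun i hi =>
      Function.update_of_ne (ne_of_mem_of_not_mem hi ha) _ _
    have himage : (insert a I).image (Function.update t a s) = insert s (I.image t) := by
      rw [image_insert, Function.update_self, image_congr heq]
    refine ⟨Function.update t a s, ?_, ?_, himage ▸ hs_free⟩
    · rw [coe_insert, Set.injOn_insert (mt mem_coe.mp ha), Function.update_self,
        heq.image_eq, ← coe_image]
      exact ⟨ht_inj.congr heq.symm, mt mem_coe.mp hsS⟩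
    · intro i hi
      rcases mem_insert.mp hi with rfl | hi
      · rwa [Function.update_self]
      · rw [heq hi]
        exact ht_mem i hi

lemma exists_isTranslateFree_card_fiber (hx : x ≠ 1) {ι : Type*} [DecidableEq ι] (φ : G → ι)
    (V : Finset ι) (k : ι → ℕ) (hk : ∀ v ∈ V, k v ≠ 0 → (φ ⁻¹' {v}).Infinite) :
    ∃ S : Finset G, IsTranslateFree x S ∧ #S = ∑ v ∈ V, k v ∧
      ∀ v ∈ V, #{s ∈ S | φ s = v} = k v := by
  classical
  set I := V.sigma fun v => range (k v)
  obtain ⟨t, ht_inj, ht_mem, ht_free⟩ := exists_injOn_isTranslateFree hx (fun i => φ ⁻¹' {i.1}) I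
    fun i hi => by
      rw [mem_sigma, mem_range] at hi
      exact hk i.1 hi.1 (Nat.zero_lt_of_lt hi.2).ne'
  refine ⟨I.image t, ht_free, by rw [card_image_of_injOn ht_inj, card_sigma]; simp, fun v hv => ?_⟩
  rw [filter_image, card_image_of_injOn (ht_inj.mono (coe_subset.mpr (filter_subset _ _))),
    filter_congr fun i hi => by rw [ht_mem i hi]]
  rw [card_filter, sum_sigma]
  simp [apply_ite card, hv]

lemma exists_isTranslateFree_finsetMean_near {m : lp (fun _ : G => ℝ) ⊤ →ₗ[ℝ] ℝ}
    (hm : IsDiscreteMean m)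
    (hvanish : ∀ F : Finset G, ∀ f : lp (fun _ : G => ℝ) ⊤,
      (∀ y, f y = Set.indicator (F : Set G) (fun _ => (1 : ℝ)) y) → m f = 0)
    (hx : x ≠ 1) {ι : Type*} (φ : G → ι) (V : Finset ι) (hV : ∀ g, φ g ∈ V)
    {η : ℝ} (hη : 0 < η) :
    ∃ S : Finset G, S.Nonempty ∧ IsTranslateFree x S ∧ ∀ v ∈ V,
      |m (indicatorLp (φ ⁻¹' {v})) - finsetMean S (indicatorLp (φ ⁻¹' {v}))| ≤ η := by
  classical
  obtain ⟨k, hk0, hk_pos, hk⟩ := exists_nat_div_sum_near V (fun v => m (indicatorLp (φ ⁻¹' {v})))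
    (fun v => hm.1 _ fun g => Set.indicator_nonneg (fun _ _ => zero_le_one) g)
    (hm.sum_apply_indicatorLp_fiber φ V hV) hη
  obtain ⟨S, hS_free, hS_card, hS_fiber⟩ := exists_isTranslateFree_card_fiber hx φ V k
    fun v _ hkv => infinite_of_apply_indicatorLp_ne_zero hvanish (mt (hk0 v) hkv)
  refine ⟨S, card_pos.mp (hS_card ▸ hk_pos), hS_free, fun v hv => ?_⟩
  rw [finsetMean_indicatorLp, hS_card, abs_sub_comm]
  simpa [hS_fiber v hv] using hk v hv

end Selection

lemma abs_sub_floor_div_mul_le (a : ℝ) {δ : ℝ} (hδ : 0 < δ) : |a - ⌊a / δ⌋ * δ| ≤ δ :=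
  abs_le.mpr ⟨by linarith [Int.sub_floor_div_mul_nonneg a hδ], (Int.sub_floor_div_mul_lt a hδ).le⟩

lemma finite_range_floor_div {G ι : Type*} [Finite ι] (F : ι → lp (fun _ : G => ℝ) ⊤) {δ : ℝ}
    (hδ : 0 < δ) : (Set.range fun g i => ⌊F i g / δ⌋).Finite := by
  refine (Set.Finite.pi' fun i => Set.finite_Icc ⌊-‖F i‖ / δ⌋ ⌊‖F i‖ / δ⌋).subset ?_
  rintro _ ⟨g, rfl⟩ i
  have := abs_le.mp (lp.norm_apply_le_norm ENNReal.top_ne_zero (F i) g)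
  exact ⟨Int.floor_mono (by gcongr; exact this.1), Int.floor_mono (by gcongr; exact this.2)⟩

/-- If `m` is a mean on `ℓ∞(G)` vanishing on characteristic functions of
finite sets and `x ≠ e`, then `m` is a weak-* limit point of means `μ_S` over finite
nonempty sets `S` with `S ∩ xS = ∅`. -/
theorem statement5 {G : Type*} [Group G]
    (m : lp (fun _ : G => ℝ) ⊤ →ₗ[ℝ] ℝ) (hm : IsDiscreteMean m)
    (hvanish : ∀ F : Finset G, ∀ f : lp (fun _ : G => ℝ) ⊤,
      (∀ y, f y = Set.indicator (F : Set G) (fun _ => (1 : ℝ)) y) → m f = 0)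
    (x : G) (hx : x ≠ 1)
    (Φ : Finset (lp (fun _ : G => ℝ) ⊤)) (ε : ℝ) (hε : 0 < ε) :
    ∃ S : Finset G, S.Nonempty ∧ (∀ s ∈ S, x * s ∉ S) ∧
      ∀ f ∈ Φ, |m f - (S.card : ℝ)⁻¹ * ∑ s ∈ S, f s| < ε := by
  set δ := ε / 4
  have hδ : 0 < δ := by positivity
  set φ : G → Φ → ℤ := fun g f => ⌊(f : lp (fun _ : G => ℝ) ⊤) g / δ⌋
  set V := (finite_range_floor_div (fun f : Φ => (f : lp (fun _ : G => ℝ) ⊤)) hδ).toFinset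
  have hV : ∀ g, φ g ∈ V := fun g => Set.Finite.mem_toFinset _ |>.mpr ⟨g, rfl⟩
  set c : Φ → (Φ → ℤ) → ℝ := fun f v => v f * δ
  set C := ∑ f : Φ, ∑ v ∈ V, |c f v|
  obtain ⟨η, hη, hηC⟩ := exists_pos_mul_lt hδ C
  obtain ⟨S, hS, hS_free, hS_near⟩ :=
    exists_isTranslateFree_finsetMean_near hm hvanish hx φ V hV hη
  refine ⟨S, hS, hS_free, fun f hf => ?_⟩
  have hmS := hm.abs_apply_sub_apply_le φ V hV (isDiscreteMean_finsetMean hS) (c ⟨f, hf⟩)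
    (fun g => abs_sub_floor_div_mul_le _ hδ) hS_near
  have hcf : ∑ v ∈ V, |c ⟨f, hf⟩ v| ≤ C :=
    single_le_sum (f := fun f : Φ => ∑ v ∈ V, |c f v|)
      (fun _ _ => sum_nonneg fun _ _ => abs_nonneg _) (mem_univ _)
  rw [finsetMean_apply] at hmS
  calc _ ≤ 2 * δ + η * ∑ v ∈ V, |c ⟨f, hf⟩ v| := hmS
    _ ≤ 2 * δ + η * C := by gcongr
    _ < ε := by linarith [show δ = ε / 4 from rfl]
end

section
/- Let G be a (discrete) group in which every conjugacy class {g x g⁻¹ : g ∈ G} is finite. Then G is amenable: there exists a left-invariant mean on ℓ∞(G). -/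
/-!
Fix a finite set `F ⊆ G`. Since conjugacy classes are finite, the centralizer of `F` has finite
index, so `Z = C(F) ⊓ ⟨F⟩` is an abelian subgroup of finite index in `⟨F⟩`. A mean invariant
under a commuting family is built one element `a` at a time: take an ultralimit of the Cesàro
averages `N⁻¹ ∑_{k < N} m (f (a ^ k * ·))`; invariance under `a` follows by telescoping, and
invariance under the elements commuting with `a` survives. Averaging a `Z`-invariant mean over
representatives of `⟨F⟩ ⧸ Z` makes it `⟨F⟩`-invariant, and an ultralimit along the finite
subsets of `G` gives a mean invariant under all of `G`.
-/

open Filter Topology Finset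

section Means

local notation "ℓ∞(" G ")" => lp (fun _ : G => ℝ) ⊤

variable {G : Type*}

def leftTranslate [Mul G] (x : G) : ℓ∞(G) →ₗ[ℝ] ℓ∞(G) where
  toFun f := ⟨fun y => f (x * y), memℓp_infty_iff.2 <| (memℓp_infty_iff.1 f.2).mono <|
    Set.range_comp_subset_range (x * ·) fun i => ‖f i‖⟩
  map_add' _ _ := rfl
  map_smul' _ _ := rfl

@[simp]
lemma leftTranslate_apply [Mul G] (x : G) (f : ℓ∞(G)) (y : G) :
    leftTranslate x f y = f (x * y) := rfl

lemma leftTranslate_mul [Semigroup G] (x y : G) (f : ℓ∞(G)) :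
    leftTranslate (x * y) f = leftTranslate y (leftTranslate x f) :=
  lp.ext <| funext fun _ => by simp [mul_assoc]

lemma leftTranslate_one [MulOneClass G] (f : ℓ∞(G)) : leftTranslate (1 : G) f = f :=
  lp.ext <| funext fun _ => by simp

lemma leftTranslate_map_one [Mul G] (x : G) : leftTranslate x (1 : ℓ∞(G)) = 1 :=
  lp.ext <| funext fun _ => by simp [lp.infty_coeFn_one]

lemma norm_leftTranslate_le [Mul G] (x : G) (f : ℓ∞(G)) : ‖leftTranslate x f‖ ≤ ‖f‖ :=
  lp.norm_le_of_forall_le (norm_nonneg f) fun _ => lp.norm_apply_le_norm ENNReal.top_ne_zero f _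

structure IsMean (m : ℓ∞(G) →ₗ[ℝ] ℝ) : Prop where
  nonneg : ∀ f : ℓ∞(G), (∀ y, 0 ≤ f y) → 0 ≤ m f
  map_one : m 1 = 1

def IsInvariantUnder [Mul G] (m : ℓ∞(G) →ₗ[ℝ] ℝ) (x : G) : Prop :=
  ∀ f, m (leftTranslate x f) = m f

namespace IsMean

variable {m : ℓ∞(G) →ₗ[ℝ] ℝ}

lemma mono (hm : IsMean m) {f g : ℓ∞(G)} (h : ∀ y, f y ≤ g y) : m f ≤ m g := by
  have := hm.nonneg (g - f) fun y => by simpa [lp.coeFn_sub] using h y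
  rwa [map_sub, sub_nonneg] at this

lemma abs_le_norm (hm : IsMean m) (f : ℓ∞(G)) : |m f| ≤ ‖f‖ := by
  have hf (y : G) : |f y| ≤ ‖f‖ := lp.norm_apply_le_norm ENNReal.top_ne_zero f y
  have hc (c : ℝ) : m (c • 1) = c := by rw [map_smul, hm.map_one, smul_eq_mul, mul_one]
  have hc' (c : ℝ) (y : G) : (c • 1 : ℓ∞(G)) y = c := by
    rw [lp.coeFn_smul, lp.infty_coeFn_one, Pi.smul_apply, Pi.one_apply, smul_eq_mul, mul_one]
  have lower := hm.mono (f := (-‖f‖) • 1) (g := f) fun y => hc' _ y ▸ (abs_le.1 (hf y)).1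
  have upper := hm.mono (f := f) (g := ‖f‖ • 1) fun y => hc' _ y ▸ (abs_le.1 (hf y)).2
  rw [hc] at lower upper
  exact abs_le.2 ⟨lower, upper⟩

lemma comp_leftTranslate [Mul G] (hm : IsMean m) (x : G) : IsMean (m ∘ₗ leftTranslate x) where
  nonneg f hf := hm.nonneg _ fun y => hf _
  map_one := by rw [LinearMap.comp_apply, leftTranslate_map_one, hm.map_one]

lemma average {ι : Type*} {s : Finset ι} (hs : s.Nonempty) {ms : ι → ℓ∞(G) →ₗ[ℝ] ℝ}
    (hms : ∀ i ∈ s, IsMean (ms i)) : IsMean ((#s : ℝ)⁻¹ • ∑ i ∈ s, ms i) where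
  nonneg f hf := by
    simp only [LinearMap.smul_apply, LinearMap.sum_apply, smul_eq_mul]
    exact mul_nonneg (by positivity) (sum_nonneg fun i hi => (hms i hi).nonneg f hf)
  map_one := by
    simp only [LinearMap.smul_apply, LinearMap.sum_apply, smul_eq_mul]
    rw [sum_congr rfl fun i hi => (hms i hi).map_one, sum_const, nsmul_one,
      inv_mul_cancel₀ (by exact_mod_cast hs.card_pos.ne')]

end IsMean

lemma isMean_evalₗ (y : G) : IsMean (lp.evalₗ (𝕜 := ℝ) (fun _ : G => ℝ) ⊤ y) where
  nonneg _ hf := hf y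
  map_one := by simp [lp.infty_coeFn_one]

lemma exists_isMean_tendsto {ι : Type*} (U : Ultrafilter ι) {ms : ι → ℓ∞(G) →ₗ[ℝ] ℝ}
    (hms : ∀ i, IsMean (ms i)) :
    ∃ M : ℓ∞(G) →ₗ[ℝ] ℝ, IsMean M ∧ ∀ f, Tendsto (fun i => ms i f) U (𝓝 (M f)) := by
  have hlim (f : ℓ∞(G)) : ∃ L, Tendsto (fun i => ms i f) U (𝓝 L) := by
    obtain ⟨L, -, hL⟩ := isCompact_Icc.ultrafilter_le_nhds' (U.map fun i => ms i f)
      (Ultrafilter.mem_map.2 <| Eventually.of_forall fun i => abs_le.1 ((hms i).abs_le_norm f))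
    exact ⟨L, hL⟩
  choose M hM using hlim
  refine ⟨{ toFun := M, map_add' := fun f g => ?_, map_smul' := fun c f => ?_ }, ⟨?_, ?_⟩, hM⟩
  · exact tendsto_nhds_unique (hM _) (by simpa using (hM f).add (hM g))
  · exact tendsto_nhds_unique (hM _) (by simpa using (hM f).const_mul c)
  · exact fun f hf => ge_of_tendsto' (hM f) fun i => (hms i).nonneg f hf
  · exact tendsto_nhds_unique (hM 1) (by simp [(hms _).map_one])

section Invariance

variable [Mul G] {ι : Type*} {l : Filter ι} [l.NeBot] {ms : ι → ℓ∞(G) →ₗ[ℝ] ℝ}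
  {M : ℓ∞(G) →ₗ[ℝ] ℝ} {x : G}

lemma isInvariantUnder_of_tendsto (hM : ∀ f, Tendsto (fun i => ms i f) l (𝓝 (M f)))
    (hx : ∀ f, Tendsto (fun i => ms i (leftTranslate x f) - ms i f) l (𝓝 0)) :
    IsInvariantUnder M x := fun f =>
  sub_eq_zero.1 <| tendsto_nhds_unique ((hM _).sub (hM f)) (hx f)

lemma isInvariantUnder_of_eventually (hM : ∀ f, Tendsto (fun i => ms i f) l (𝓝 (M f)))
    (hx : ∀ᶠ i in l, IsInvariantUnder (ms i) x) : IsInvariantUnder M x :=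
  isInvariantUnder_of_tendsto hM fun f =>
    tendsto_const_nhds.congr' <| hx.mono fun _ hi => (sub_eq_zero.2 (hi f)).symm

end Invariance

lemma exists_isMean_forall_invariant [Mul G] {S : Set G}
    (h : ∀ F : Finset G, ↑F ⊆ S → ∃ m, IsMean m ∧ ∀ x ∈ F, IsInvariantUnder m x) :
    ∃ m, IsMean m ∧ ∀ x ∈ S, IsInvariantUnder m x := by
  classical
  choose ms hms hinv using fun F : Finset G => h {x ∈ F | x ∈ S} fun x hx => (mem_filter.1 hx).2
  obtain ⟨M, hM, hlim⟩ := exists_isMean_tendsto (.of atTop) hms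
  refine ⟨M, hM, fun x hx => isInvariantUnder_of_eventually hlim ?_⟩
  filter_upwards [Ultrafilter.of_le _ (eventually_ge_atTop {x})] with F hF
  exact hinv F x (mem_filter.2 ⟨singleton_subset_iff.1 hF, hx⟩)

lemma IsInvariantUnder.comp_leftTranslate [Semigroup G] {m : ℓ∞(G) →ₗ[ℝ] ℝ} {s x : G}
    (hm : IsInvariantUnder m s) (hxs : Commute x s) :
    IsInvariantUnder (m ∘ₗ leftTranslate x) s := fun f => by
  rw [LinearMap.comp_apply, LinearMap.comp_apply, ← leftTranslate_mul, ← hxs.eq,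
    leftTranslate_mul, hm]

lemma IsMean.exists_invariant_insert [Monoid G] {m : ℓ∞(G) →ₗ[ℝ] ℝ} (hm : IsMean m)
    {S : Set G} (hS : ∀ s ∈ S, IsInvariantUnder m s) {a : G} (ha : ∀ s ∈ S, Commute a s) :
    ∃ M, IsMean M ∧ ∀ x ∈ insert a S, IsInvariantUnder M x := by
  set cesaro : ℕ → ℓ∞(G) →ₗ[ℝ] ℝ := fun N =>
    (#(range (N + 1)) : ℝ)⁻¹ • ∑ k ∈ range (N + 1), m ∘ₗ leftTranslate (a ^ k)
  obtain ⟨M, hM, hlim⟩ := exists_isMean_tendsto (ms := cesaro) (.of atTop) fun N =>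
    IsMean.average nonempty_range_add_one fun k _ => hm.comp_leftTranslate (a ^ k)
  refine ⟨M, hM, Set.forall_mem_insert.2 ⟨isInvariantUnder_of_tendsto hlim fun f => ?_,
    fun s hs => isInvariantUnder_of_eventually hlim (.of_forall fun N f => ?_)⟩⟩
  · have htelescope (N : ℕ) : cesaro N (leftTranslate a f) - cesaro N f =
        ((N : ℝ) + 1)⁻¹ * (m (leftTranslate (a ^ (N + 1)) f) - m f) := by
      simp only [cesaro, LinearMap.smul_apply, LinearMap.sum_apply, LinearMap.comp_apply,
        smul_eq_mul, card_range, Nat.cast_add, Nat.cast_one, ← mul_sub, ← sum_sub_distrib,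
        ← leftTranslate_mul, ← pow_succ']
      rw [sum_range_sub fun k => m (leftTranslate (a ^ k) f), pow_zero, leftTranslate_one]
    have hbound (N : ℕ) :
        ‖cesaro N (leftTranslate a f) - cesaro N f‖ ≤ 2 * ‖f‖ * (1 / ((N : ℝ) + 1)) := by
      rw [htelescope, Real.norm_eq_abs, abs_mul, abs_of_pos (by positivity), one_div, mul_comm]
      gcongr
      calc _ ≤ |m (leftTranslate (a ^ (N + 1)) f)| + |m f| := abs_sub _ _
        _ ≤ ‖f‖ + ‖f‖ := add_le_add ((hm.abs_le_norm _).trans (norm_leftTranslate_le _ _))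
          (hm.abs_le_norm f)
        _ = 2 * ‖f‖ := by ring
    refine squeeze_zero_norm hbound ?_
    simpa using (tendsto_one_div_add_atTop_nhds_zero_nat.const_mul (2 * ‖f‖)).mono_left
      (Ultrafilter.of_le atTop)
  · simp only [cesaro, LinearMap.smul_apply, LinearMap.sum_apply]
    rw [sum_congr rfl fun k _ => (hS s hs).comp_leftTranslate ((ha s hs).pow_left k) f]

lemma exists_isMean_invariant_of_pairwise_commute [Monoid G] {S : Set G}
    (hS : S.Pairwise Commute) : ∃ m, IsMean m ∧ ∀ x ∈ S, IsInvariantUnder m x := by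
  classical
  refine exists_isMean_forall_invariant fun F hF => ?_
  induction F using Finset.induction_on with
  | empty => exact ⟨_, isMean_evalₗ 1, by simp⟩
  | insert a F haF ih =>
    rw [coe_insert, Set.insert_subset_iff] at hF
    obtain ⟨m, hm, hinv⟩ := ih hF.2
    obtain ⟨M, hM, hMinv⟩ := hm.exists_invariant_insert (S := ↑F) hinv fun s hs =>
      hS hF.1 (hF.2 hs) (ne_of_mem_of_not_mem hs haF).symm
    exact ⟨M, hM, fun x hx => hMinv x (by simpa using hx)⟩

lemma IsMean.exists_invariant_of_finiteIndex [Group G] {m : ℓ∞(G) →ₗ[ℝ] ℝ} (hm : IsMean m)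
    {H K : Subgroup G} [(K.subgroupOf H).FiniteIndex]
    (hK : ∀ z ∈ K ⊓ H, IsInvariantUnder m z) :
    ∃ M, IsMean M ∧ ∀ x ∈ H, IsInvariantUnder M x := by
  classical
  let _ : Fintype (H ⧸ K.subgroupOf H) := Fintype.ofFinite _
  refine ⟨(#(univ : Finset (H ⧸ K.subgroupOf H)) : ℝ)⁻¹ •
      ∑ q : H ⧸ K.subgroupOf H, m ∘ₗ leftTranslate (q.out : G),
    IsMean.average univ_nonempty fun q _ => hm.comp_leftTranslate _, fun x hx f => ?_⟩
  have hterm (q : H ⧸ K.subgroupOf H) : m (leftTranslate (q.out : G) (leftTranslate x f)) =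
      m (leftTranslate ((⟨x, hx⟩ : H) • q).out.1 f) := by
    obtain ⟨h, hh⟩ := QuotientGroup.mk_out_eq_mul (K.subgroupOf H) (⟨x, hx⟩ * q.out)
    rw [← smul_eq_mul, MulAction.Quotient.mk_smul_out] at hh
    rw [hh, smul_eq_mul, Subgroup.coe_mul, leftTranslate_mul, Subgroup.coe_mul,
      leftTranslate_mul, hK _ (Subgroup.mem_inf.2 ⟨Subgroup.mem_subgroupOf.1 h.2, h.1.2⟩)]
  simp only [LinearMap.smul_apply, LinearMap.sum_apply, LinearMap.comp_apply, hterm]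
  congr 1
  exact Equiv.sum_comp (MulAction.toPerm (⟨x, hx⟩ : H)) fun q : H ⧸ K.subgroupOf H =>
    m (leftTranslate (q.out : G) f)

lemma finiteIndex_centralizer_singleton [Group G] {a : G}
    (ha : {y | ∃ g : G, g * a * g⁻¹ = y}.Finite) : (Subgroup.centralizer {a}).FiniteIndex := by
  have horbit : MulAction.orbit (ConjAct G) a = {y | ∃ g : G, g * a * g⁻¹ = y} :=
    Set.ext fun y => ConjAct.toConjAct.surjective.exists.trans <| by simp [ConjAct.smul_def]
  have hindex : (Subgroup.centralizer {a}).index = (MulAction.orbit (ConjAct G) a).ncard := by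
    rw [Subgroup.centralizer_eq_comap_stabilizer]
    exact (Subgroup.index_comap_of_surjective _ ConjAct.toConjAct.surjective).trans
      (MulAction.index_stabilizer _ a)
  rw [Subgroup.finiteIndex_iff, hindex, horbit]
  exact ((Set.ncard_pos ha).2 ⟨a, 1, by simp⟩).ne'

lemma pairwise_commute_centralizer_inf_closure [Group G] (s : Set G) :
    (↑(Subgroup.centralizer s ⊓ Subgroup.closure s) : Set G).Pairwise Commute :=
  fun z hz w hw _ => by
    rw [Subgroup.coe_inf, ← Subgroup.centralizer_closure] at hz hw
    exact (Subgroup.mem_centralizer_iff.1 hz.1 w hw.2).symm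

lemma exists_isMean_invariant_finset_of_finite_conj [Group G]
    (hfc : ∀ x : G, {y | ∃ g : G, g * x * g⁻¹ = y}.Finite) (F : Finset G) :
    ∃ m, IsMean m ∧ ∀ x ∈ F, IsInvariantUnder m x := by
  have : (Subgroup.centralizer (F : Set G)).FiniteIndex := by
    rw [Subgroup.centralizer_eq_iInf]
    exact Subgroup.finiteIndex_iInf' _ fun a _ => finiteIndex_centralizer_singleton (hfc a)
  obtain ⟨m, hm, hinv⟩ := exists_isMean_invariant_of_pairwise_commute
    (pairwise_commute_centralizer_inf_closure (F : Set G))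
  obtain ⟨M, hM, hMinv⟩ := hm.exists_invariant_of_finiteIndex hinv
  exact ⟨M, hM, fun x hx => hMinv x (Subgroup.subset_closure hx)⟩

end Means

/-- A (discrete) group in which every conjugacy class is finite is
amenable: there is a left-invariant mean on `ℓ∞(G)` (realized as
`lp (fun _ : G => ℝ) ⊤`, the bounded real-valued functions on `G`). -/
theorem statement10 {G : Type*} [Group G]
    (hfc : ∀ x : G, Set.Finite {y : G | ∃ g : G, g * x * g⁻¹ = y}) :
    ∃ m : lp (fun _ : G => ℝ) ⊤ →ₗ[ℝ] ℝ,
      (∀ f : lp (fun _ : G => ℝ) ⊤, (∀ y, 0 ≤ f y) → 0 ≤ m f) ∧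
      (∀ f : lp (fun _ : G => ℝ) ⊤, (∀ y, f y = 1) → m f = 1) ∧
      (∀ (x : G) (f g : lp (fun _ : G => ℝ) ⊤), (∀ y, g y = f (x * y)) → m g = m f) := by
  obtain ⟨m, hm, hinv⟩ := exists_isMean_forall_invariant (S := Set.univ) fun F _ =>
    exists_isMean_invariant_finset_of_finite_conj hfc F
  refine ⟨m, hm.nonneg, fun f hf => ?_, fun x f g hg => ?_⟩
  · rw [show f = 1 from lp.ext (funext fun y => by simp [hf, lp.infty_coeFn_one]), hm.map_one]
  · rw [show g = leftTranslate x f from lp.ext (funext hg), hinv x trivial]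
end

section
/- The set of Banach limits, i.e., linear functionals m on the space ℓ∞ of bounded real sequences satisfying m(x) ≥ 0 whenever x ≥ 0, m(1) = 1, and m(x) = m(n ↦ x(n+1)) for all x ∈ ℓ∞, has cardinality 2^(2^ℵ₀). -/
/-!
For a nonprincipal ultrafilter `U` on `ℕ`, let `m_U f` be the `U`-limit of the averages of `f`
over the blocks `[k², (k+1)²)`. Shifting `f` changes the `k`-th block average by `O(1/k)`, so
`m_U` is a Banach limit. On the indicator of `⋃_{k ∈ S} [k², (k+1)²)` every `k`-th block average
is exactly `1_S(k)`, so `m_U` takes the value `1` there iff `S ∈ U`; hence `U ↦ m_U` is injective.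

There are `2 ^ 𝔠` nonprincipal ultrafilters on `ℕ` (Hausdorff): on the countable set of pairs
`(N, 𝒢)`, `N ∈ ℕ`, `𝒢` a finite family of finite subsets of `ℕ`, the sets
`{(N, 𝒢) | X ∩ [0, N) ∈ 𝒢}` for `X ⊆ ℕ` form an independent family, and every choice of a side of
each of its members extends to a nonprincipal ultrafilter. Conversely `#ℓ∞ = 𝔠`, so there are at
most `𝔠 ^ 𝔠 = 2 ^ 𝔠` functionals on `ℓ∞`.
-/

open Filter Set Topology Cardinal
open scoped lp ENNReal

universe u

noncomputable section

lemma Ultrafilter.tendsto_limUnder_of_norm_le {ι E : Type*} [NormedAddCommGroup E]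
    [ProperSpace E] (U : Ultrafilter ι) {x : ι → E} {C : ℝ} (hx : ∀ i, ‖x i‖ ≤ C) :
    Tendsto x U (𝓝 (limUnder U x)) := by
  obtain ⟨a, -, ha⟩ := (isCompact_closedBall (0 : E) C).ultrafilter_le_nhds (U.map x)
    (le_principal_iff.2 (mem_map.2 (univ_mem' fun i => mem_closedBall_zero_iff.2 (hx i))))
  exact tendsto_nhds_limUnder ⟨a, ha⟩

def blockAverage (f : ℕ → ℝ) (k : ℕ) : ℝ :=
  (∑ i ∈ Finset.range (2 * k + 1), f (k * k + i)) / (2 * k + 1)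

lemma blockAverage_add (f g : ℕ → ℝ) :
    blockAverage (f + g) = blockAverage f + blockAverage g := by
  funext k
  simp only [blockAverage, Pi.add_apply, Finset.sum_add_distrib, add_div]

lemma blockAverage_smul (c : ℝ) (f : ℕ → ℝ) : blockAverage (c • f) = c • blockAverage f := by
  funext k
  simp only [blockAverage, Pi.smul_apply, smul_eq_mul, ← Finset.mul_sum, mul_div_assoc]

lemma blockAverage_const (c : ℝ) : blockAverage (fun _ => c) = fun _ => c := by
  funext k
  rw [blockAverage, Finset.sum_const, Finset.card_range, nsmul_eq_mul]
  have : (2 * k + 1 : ℝ) ≠ 0 := by positivity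
  push_cast
  field_simp

lemma blockAverage_nonneg {f : ℕ → ℝ} (hf : ∀ n, 0 ≤ f n) (k : ℕ) : 0 ≤ blockAverage f k :=
  div_nonneg (Finset.sum_nonneg fun i _ => hf _) (by positivity)

lemma norm_blockAverage_le {f : ℕ → ℝ} {C : ℝ} (hf : ∀ n, ‖f n‖ ≤ C) (k : ℕ) :
    ‖blockAverage f k‖ ≤ C := by
  rw [blockAverage, norm_div, Real.norm_of_nonneg (by positivity : (0 : ℝ) ≤ 2 * k + 1),
    div_le_iff₀ (by positivity)]
  calc ‖∑ i ∈ Finset.range (2 * k + 1), f (k * k + i)‖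
      ≤ ∑ i ∈ Finset.range (2 * k + 1), ‖f (k * k + i)‖ := norm_sum_le _ _
    _ ≤ ∑ i ∈ Finset.range (2 * k + 1), C := Finset.sum_le_sum fun i _ => hf _
    _ = C * (2 * k + 1) := by
      rw [Finset.sum_const, Finset.card_range, nsmul_eq_mul]
      push_cast
      ring

lemma blockAverage_comp_succ_sub (f : ℕ → ℝ) (k : ℕ) :
    blockAverage (fun n => f (n + 1)) k - blockAverage f k =
      (f (k * k + (2 * k + 1)) - f (k * k)) / (2 * k + 1) := by
  rw [blockAverage, blockAverage, ← sub_div, ← Finset.sum_sub_distrib]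
  exact congrArg (· / _) (Finset.sum_range_sub (fun i => f (k * k + i)) _)

lemma tendsto_blockAverage_comp_succ_sub {f : ℕ → ℝ} {C : ℝ} (hf : ∀ n, ‖f n‖ ≤ C) :
    Tendsto (fun k => blockAverage (fun n => f (n + 1)) k - blockAverage f k) atTop (𝓝 0) := by
  have hden : Tendsto (fun k : ℕ => (2 * k + 1 : ℝ)) atTop atTop :=
    tendsto_atTop_add_const_right _ 1 (tendsto_natCast_atTop_atTop.const_mul_atTop two_pos)
  refine squeeze_zero_norm (fun k => ?_) (tendsto_const_nhds (x := 2 * C).div_atTop hden)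
  rw [blockAverage_comp_succ_sub, norm_div,
    Real.norm_of_nonneg (by positivity : (0 : ℝ) ≤ 2 * k + 1)]
  gcongr
  exact (norm_sub_le _ _).trans (by linarith [hf (k * k + (2 * k + 1)), hf (k * k)])

lemma blockAverage_indicator_sqrt (S : Set ℕ) :
    blockAverage ((Nat.sqrt ⁻¹' S).indicator 1) = S.indicator 1 := by
  funext k
  have hblock : ∀ i ∈ Finset.range (2 * k + 1),
      (Nat.sqrt ⁻¹' S).indicator (1 : ℕ → ℝ) (k * k + i) = S.indicator 1 k := fun i hi => by
    have hsqrt : Nat.sqrt (k * k + i) = k := Nat.sqrt_add_eq k (by simp at hi; omega)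
    conv_rhs => rw [← hsqrt]
    exact indicator_comp_right (g := (1 : ℕ → ℝ)) Nat.sqrt
  rw [blockAverage, Finset.sum_congr rfl hblock, Finset.sum_const, Finset.card_range, nsmul_eq_mul]
  have : (2 * k + 1 : ℝ) ≠ 0 := by positivity
  push_cast
  field_simp

def IsBanachLimit (m : ℓ^∞(ℕ, ℝ) →ₗ[ℝ] ℝ) : Prop :=
  (∀ f : ℓ^∞(ℕ, ℝ), (∀ n, 0 ≤ f n) → 0 ≤ m f) ∧
  (∀ f : ℓ^∞(ℕ, ℝ), (∀ n, f n = 1) → m f = 1) ∧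
  (∀ f g : ℓ^∞(ℕ, ℝ), (∀ n, g n = f (n + 1)) → m g = m f)

lemma tendsto_limUnder_blockAverage (U : Ultrafilter ℕ) (f : ℓ^∞(ℕ, ℝ)) :
    Tendsto (blockAverage f) U (𝓝 (limUnder U (blockAverage f))) :=
  U.tendsto_limUnder_of_norm_le
    (norm_blockAverage_le (lp.norm_apply_le_norm ENNReal.top_ne_zero f))

def banachLimit (U : Ultrafilter ℕ) : ℓ^∞(ℕ, ℝ) →ₗ[ℝ] ℝ where
  toFun f := limUnder U (blockAverage f)
  map_add' f g := by
    rw [lp.coeFn_add, blockAverage_add]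
    exact ((tendsto_limUnder_blockAverage U f).add
      (tendsto_limUnder_blockAverage U g)).limUnder_eq
  map_smul' c f := by
    rw [lp.coeFn_smul, blockAverage_smul]
    exact ((tendsto_limUnder_blockAverage U f).const_smul c).limUnder_eq

lemma tendsto_blockAverage_banachLimit (U : Ultrafilter ℕ) (f : ℓ^∞(ℕ, ℝ)) :
    Tendsto (blockAverage f) U (𝓝 (banachLimit U f)) :=
  tendsto_limUnder_blockAverage U f

lemma isBanachLimit_banachLimit {U : Ultrafilter ℕ} (hU : (U : Filter ℕ) ≤ cofinite) :
    IsBanachLimit (banachLimit U) := by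
  refine ⟨fun f hf => ?_, fun f hf => ?_, fun f g hg => ?_⟩
  · exact ge_of_tendsto (tendsto_blockAverage_banachLimit U f)
      (Eventually.of_forall (blockAverage_nonneg hf))
  · have hconst : blockAverage f = fun _ => 1 := by
      rw [show ⇑f = fun _ => 1 from funext hf, blockAverage_const]
    exact tendsto_nhds_unique (tendsto_blockAverage_banachLimit U f)
      (hconst ▸ tendsto_const_nhds)
  · have hshift := (tendsto_blockAverage_comp_succ_sub
      (lp.norm_apply_le_norm ENNReal.top_ne_zero f)).mono_left
      (hU.trans_eq Nat.cofinite_eq_atTop)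
    have hg' : ⇑g = fun n => f (n + 1) := funext hg
    refine tendsto_nhds_unique (tendsto_blockAverage_banachLimit U g) ?_
    simpa [hg'] using (tendsto_blockAverage_banachLimit U f).add hshift

def blockIndicator (S : Set ℕ) : ℓ^∞(ℕ, ℝ) :=
  ⟨(Nat.sqrt ⁻¹' S).indicator 1, memℓp_infty ⟨1, by
    rintro _ ⟨n, rfl⟩
    by_cases hn : n ∈ Nat.sqrt ⁻¹' S <;> simp [hn]⟩⟩

lemma banachLimit_blockIndicator_eq_one_iff (U : Ultrafilter ℕ) (S : Set ℕ) :
    banachLimit U (blockIndicator S) = 1 ↔ S ∈ U := by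
  have hlim := tendsto_blockAverage_banachLimit U (blockIndicator S)
  rw [show ⇑(blockIndicator S) = (Nat.sqrt ⁻¹' S).indicator 1 from rfl,
    blockAverage_indicator_sqrt] at hlim
  by_cases hS : S ∈ U
  · refine iff_of_true (tendsto_nhds_unique hlim (tendsto_const_nhds.congr' ?_)) hS
    exact eventuallyEq_of_mem hS fun k hk => (indicator_of_mem hk (1 : ℕ → ℝ)).symm
  · refine iff_of_false (fun h => zero_ne_one (tendsto_nhds_unique ?_ (h ▸ hlim))) hS
    refine tendsto_const_nhds.congr' (eventuallyEq_of_mem (Ultrafilter.compl_mem_iff_notMem.2 hS)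
      fun k hk => (indicator_of_notMem hk (1 : ℕ → ℝ)).symm)

lemma banachLimit_injective : Function.Injective banachLimit := fun U V h =>
  Ultrafilter.eq_of_le fun S (hS : S ∈ V) => show S ∈ U by
    rwa [← banachLimit_blockIndicator_eq_one_iff, h, banachLimit_blockIndicator_eq_one_iff]

def IsIndependentFamily {ι α : Type*} (A : ι → Set α) : Prop :=
  ∀ (s : Finset ι) (T : Set ι), {a | ∀ i ∈ s, (a ∈ A i ↔ i ∈ T)}.Infinite

namespace IsIndependentFamily

variable {ι α β : Type*} {A : ι → Set α}

lemma preimage (hA : IsIndependentFamily A) {f : β → α} (hf : Function.Surjective f) :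
    IsIndependentFamily fun i => f ⁻¹' A i :=
  fun s T => (hA s T).preimage (hf.range_eq ▸ subset_univ _)

lemma exists_ultrafilter (hA : IsIndependentFamily A) (T : Set ι) :
    ∃ U : Ultrafilter α, (U : Filter α) ≤ cofinite ∧ ∀ i, A i ∈ U ↔ i ∈ T := by
  classical
  let F : Finset ι → Filter α := fun s => cofinite ⊓ 𝓟 {a | ∀ i ∈ s, (a ∈ A i ↔ i ∈ T)}
  have hdir : Directed (· ≥ ·) F := fun s t =>
    ⟨s ∪ t,
      inf_le_inf_left _ (principal_mono.2 fun a ha i hi => ha i (Finset.mem_union_left t hi)),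
      inf_le_inf_left _ (principal_mono.2 fun a ha i hi => ha i (Finset.mem_union_right s hi))⟩
  have : (⨅ s, F s).NeBot :=
    iInf_neBot_of_directed' hdir fun s => (hA s T).cofinite_inf_principal_neBot
  have hU : ↑(Ultrafilter.of (⨅ s, F s)) ≤ ⨅ s, F s := Ultrafilter.of_le _
  refine ⟨Ultrafilter.of (⨅ s, F s), hU.trans (iInf_le_of_le ∅ inf_le_left), fun i => ?_⟩
  have hi : {a | a ∈ A i ↔ i ∈ T} ∈ Ultrafilter.of (⨅ s, F s) :=
    hU (mem_iInf_of_mem {i} (mem_inf_of_right (by simp)))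
  by_cases hiT : i ∈ T
  · simpa [hiT] using hi
  · rw [iff_false_intro hiT, iff_false, ← Ultrafilter.compl_mem_iff_notMem]
    exact (by simpa [hiT] using hi : {a | a ∉ A i} ∈ Ultrafilter.of (⨅ s, F s))

end IsIndependentFamily

lemma IsIndependentFamily.two_power_mk_le {ι α : Type u} {A : ι → Set α}
    (hA : IsIndependentFamily A) :
    2 ^ #ι ≤ #{U : Ultrafilter α // (U : Filter α) ≤ cofinite} := by
  choose U hU hAU using exists_ultrafilter hA
  rw [← mk_set]
  refine mk_le_of_injective (f := fun T => ⟨U T, hU T⟩) fun T T' h => ?_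
  ext i
  rw [← hAU, ← hAU, show U T = U T' from congrArg Subtype.val h]

lemma exists_injOn_inter_Iio (s : Finset (Set ℕ)) :
    ∃ N₀, ∀ N ≥ N₀, InjOn (· ∩ Iio N) (s : Set (Set ℕ)) := by
  classical
  have hsep : ∀ X Y : Set ℕ, X ≠ Y → ∃ n, ¬(n ∈ X ↔ n ∈ Y) := fun X Y h => by
    simpa [Set.ext_iff] using h
  choose! p hp using hsep
  refine ⟨(s ×ˢ s).sup fun q => p q.1 q.2 + 1, fun N hN X hX Y hY hXY => ?_⟩
  by_contra hne
  have hlt : p X Y + 1 ≤ N := (Finset.le_sup (f := fun q => p q.1 q.2 + 1) (b := (X, Y))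
    (Finset.mem_product.2 ⟨hX, hY⟩)).trans hN
  exact hp X Y hne (by simpa [Nat.lt_of_succ_le hlt] using Set.ext_iff.1 hXY (p X Y))

def truncationListed (X : Set ℕ) : Set (ℕ × Finset (Finset ℕ)) :=
  {p | ∃ G ∈ p.2, (G : Set ℕ) = X ∩ Iio p.1}

lemma isIndependentFamily_truncationListed : IsIndependentFamily truncationListed := by
  classical
  intro s T
  obtain ⟨N₀, hN₀⟩ := exists_injOn_inter_Iio s
  let code : ℕ → Finset (Finset ℕ) := fun N =>
    (s.filter (· ∈ T)).image fun X => (Finset.range N).filter (· ∈ X)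
  have hcoe : ∀ N (X : Set ℕ), ((Finset.range N).filter (· ∈ X) : Set ℕ) = X ∩ Iio N :=
    fun N X => by ext; simp [and_comm]
  have hinj : InjOn (fun N => (N, code N)) (Ici N₀) := fun N _ N' _ h => congrArg Prod.fst h
  refine ((Set.Ici_infinite N₀).image hinj).mono ?_
  rintro _ ⟨N, hN, rfl⟩ X hX
  show (∃ G ∈ code N, (G : Set ℕ) = X ∩ Iio N) ↔ X ∈ T
  simp only [code, Finset.mem_image, Finset.mem_filter]
  constructor
  · rintro ⟨_, ⟨Y, ⟨hY, hYT⟩, rfl⟩, hYX⟩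
    rwa [← hN₀ N hN hY hX (by rwa [hcoe] at hYX)]
  · exact fun hXT => ⟨_, ⟨X, ⟨hX, hXT⟩, rfl⟩, hcoe N X⟩

lemma exists_isIndependentFamily_nat : ∃ A : Set ℕ → Set ℕ, IsIndependentFamily A := by
  obtain ⟨e, he⟩ := exists_surjective_nat (ℕ × Finset (Finset ℕ))
  exact ⟨_, isIndependentFamily_truncationListed.preimage he⟩

lemma two_power_continuum_le_mk_nonprincipal_ultrafilter_nat :
    2 ^ 𝔠 ≤ #{U : Ultrafilter ℕ // (U : Filter ℕ) ≤ cofinite} := by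
  obtain ⟨A, hA⟩ := exists_isIndependentFamily_nat
  simpa only [mk_set, mk_nat, two_power_aleph0] using IsIndependentFamily.two_power_mk_le hA

lemma mk_nonprincipal_ultrafilter_nat_le_mk_isBanachLimit :
    #{U : Ultrafilter ℕ // (U : Filter ℕ) ≤ cofinite} ≤ #{m // IsBanachLimit m} :=
  mk_le_of_injective (f := fun U => ⟨banachLimit U, isBanachLimit_banachLimit U.2⟩)
    fun _ _ h => Subtype.ext (banachLimit_injective (congrArg Subtype.val h))

lemma mk_lp_infty_le : #ℓ^∞(ℕ, ℝ) ≤ 𝔠 := calc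
  #ℓ^∞(ℕ, ℝ) ≤ #(ℕ → ℝ) := mk_le_of_injective Subtype.val_injective
  _ = 𝔠 := by rw [← power_def, mk_real, mk_nat, continuum_power_aleph0]

lemma mk_linearMap_lp_infty_le : #(ℓ^∞(ℕ, ℝ) →ₗ[ℝ] ℝ) ≤ 2 ^ 𝔠 := calc
  #(ℓ^∞(ℕ, ℝ) →ₗ[ℝ] ℝ) ≤ #(ℓ^∞(ℕ, ℝ) → ℝ) := mk_le_of_injective DFunLike.coe_injective
  _ = 𝔠 ^ #ℓ^∞(ℕ, ℝ) := by rw [← power_def, mk_real]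
  _ ≤ 𝔠 ^ 𝔠 := power_le_power_left continuum_ne_zero mk_lp_infty_le
  _ = 2 ^ 𝔠 := power_self_eq aleph0_le_continuum

end

/-- The set of Banach limits — positive unital linear functionals on
`ℓ∞` (the bounded real sequences, realized as `lp (fun _ : ℕ => ℝ) ⊤`) invariant under
the shift — has cardinality `2 ^ (2 ^ ℵ₀)`. -/
theorem statement11 :
    Cardinal.mk {m : lp (fun _ : ℕ => ℝ) ⊤ →ₗ[ℝ] ℝ //
      (∀ f : lp (fun _ : ℕ => ℝ) ⊤, (∀ n, 0 ≤ f n) → 0 ≤ m f) ∧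
      (∀ f : lp (fun _ : ℕ => ℝ) ⊤, (∀ n, f n = 1) → m f = 1) ∧
      (∀ f g : lp (fun _ : ℕ => ℝ) ⊤, (∀ n, g n = f (n + 1)) → m g = m f)} =
    (2 : Cardinal) ^ ((2 : Cardinal) ^ Cardinal.aleph0) := by
  rw [two_power_aleph0]
  exact le_antisymm ((mk_subtype_le _).trans mk_linearMap_lp_infty_le)
    (two_power_continuum_le_mk_nonprincipal_ultrafilter_nat.trans
      mk_nonprincipal_ultrafilter_nat_le_mk_isBanachLimit)
end

section
/- Let Γ be a directed set (a partial order in which any two elements have a common upper bound) of infinite cardinality κ, such that for every α ∈ Γ the tail T_α = {β ∈ Γ : α ≤ β} has cardinality κ. Then the set Γ* of ultrafilters on Γ that contain every tail T_α has cardinality 2^(2^κ). -/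
open Cardinal Set

lemma aux_diff_nonempty {X : Type*} {A B : Set X} (h : #A < #B) : (B \ A).Nonempty := by
  rw [Set.nonempty_iff_ne_empty]
  intro he
  exact absurd (Cardinal.mk_le_mk_of_subset (Set.diff_eq_empty.mp he)) h.not_ge

lemma aux_sdr {X ι : Type u} [Infinite X] (S : ι → Set X)
    (hι : #ι = #X) (hS : ∀ i, #X ≤ #(S i)) :
    ∃ g : ι → X, Function.Injective g ∧ ∀ i, g i ∈ S i := by
  classical
  obtain ⟨E⟩ : Nonempty ((#X).ord.ToType ≃ ι) := by
    rw [← Cardinal.eq, Cardinal.mk_ord_toType, hι]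
  have key : ∀ (i : (#X).ord.ToType) (prev : ∀ j, j < i → X),
      (S (E i) \ (Set.range (fun j : Set.Iio i => prev j j.2))).Nonempty := by
    intro i prev
    apply aux_diff_nonempty
    calc #(Set.range fun j : Set.Iio i => prev j j.2) ≤ #(Set.Iio i) := Cardinal.mk_range_le
    _ < #X := Cardinal.mk_Iio_ord_toType i
    _ ≤ #(S (E i)) := hS _
  let F : ∀ i : (#X).ord.ToType, (∀ j, j < i → X) → X := fun i prev => (key i prev).choose
  let wf : WellFounded ((· < ·) : (#X).ord.ToType → _ → Prop) := IsWellFounded.wf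
  let g0 : (#X).ord.ToType → X := wf.fix F
  have h1 : ∀ i, g0 i ∈ S (E i) \ Set.range (fun j : Set.Iio i => g0 j) := by
    intro i
    have heq : g0 i = F i fun j _ => g0 j := wf.fix_eq F i
    rw [heq]
    exact (key i fun j _ => g0 j).choose_spec
  have hinj0 : Function.Injective g0 := by
    intro i j h
    rcases lt_trichotomy i j with hij | hij | hij
    · exact absurd ⟨⟨i, hij⟩, h⟩ (fun c => (h1 j).2 c)
    · exact hij
    · exact absurd ⟨⟨j, hij⟩, h.symm⟩ (fun c => (h1 i).2 c)
  refine ⟨fun i => g0 (E.symm i), hinj0.comp E.symm.injective, fun i => ?_⟩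
  have := (h1 (E.symm i)).1
  rwa [E.apply_symm_apply] at this


/-- If `Γ` is a directed set of infinite cardinality `κ` all of whose
tails `T_α = {β | α ≤ β}` have cardinality `κ`, then the set `Γ*` of ultrafilters on `Γ`
containing every tail has cardinality `2 ^ (2 ^ κ)`. -/
theorem statement12 {Γ : Type*} [PartialOrder Γ] [IsDirected Γ (· ≤ ·)] [Infinite Γ]
    (htail : ∀ α : Γ, Cardinal.mk {β : Γ // α ≤ β} = Cardinal.mk Γ) :
    Cardinal.mk {p : Ultrafilter Γ // ∀ α : Γ, {β : Γ | α ≤ β} ∈ p} =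
      (2 : Cardinal) ^ ((2 : Cardinal) ^ Cardinal.mk Γ) := by
  classical
  -- Upper bound
  have hub : #{p : Ultrafilter Γ // ∀ α : Γ, {β : Γ | α ≤ β} ∈ p} ≤ (2:Cardinal) ^ ((2:Cardinal) ^ #Γ) := by
    calc #{p : Ultrafilter Γ // ∀ α : Γ, {β : Γ | α ≤ β} ∈ p} ≤ #(Ultrafilter Γ) :=
        Cardinal.mk_subtype_le _
    _ ≤ #(Set (Set Γ)) := by
        apply Cardinal.mk_le_of_injective (f := fun p : Ultrafilter Γ => {s : Set Γ | s ∈ p})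
        intro p q h
        ext s
        exact Set.ext_iff.mp h s
    _ = (2:Cardinal) ^ ((2:Cardinal) ^ #Γ) := by rw [Cardinal.mk_set, Cardinal.mk_set]
  -- The index type D
  let D := Finset Γ × Finset (Finset Γ)
  have hD : #D = #Γ := by
    show #(Finset Γ × Finset (Finset Γ)) = #Γ
    rw [Cardinal.mk_prod, Cardinal.lift_id, Cardinal.lift_id,
      Cardinal.mk_finset_of_infinite, Cardinal.mk_finset_of_infinite,
      Cardinal.mk_finset_of_infinite, Cardinal.mul_eq_self (Cardinal.aleph0_le_mk Γ)]
  -- A map f : Γ → D with all fibers cofinal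
  obtain ⟨f, hf⟩ : ∃ f : Γ → D, ∀ (d : D) (α : Γ), ∃ β, α ≤ β ∧ f β = d := by
    have h1 : #(D × Γ) = #Γ := by
      rw [Cardinal.mk_prod, Cardinal.lift_id, Cardinal.lift_id, hD,
        Cardinal.mul_eq_self (Cardinal.aleph0_le_mk Γ)]
    have h2 : ∀ w : D × Γ, #Γ ≤ #({β : Γ | w.2 ≤ β}) := fun w =>
      le_of_eq (htail w.2).symm
    obtain ⟨g, hginj, hgmem⟩ := aux_sdr (X := Γ) (ι := D × Γ)
      (fun w => {β : Γ | w.2 ≤ β}) h1 h2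
    refine ⟨fun β => if h : ∃ w : D × Γ, g w = β then h.choose.1 else (∅, ∅), ?_⟩
    intro d α
    refine ⟨g (d, α), hgmem (d, α), ?_⟩
    have h : ∃ w : D × Γ, g w = g (d, α) := ⟨(d, α), rfl⟩
    show (if h : ∃ w : D × Γ, g w = g (d, α) then h.choose.1 else (∅, ∅)) = d
    rw [dif_pos h, hginj h.choose_spec]
  -- the independent family pulled back to Γ
  let B : Set Γ → Set Γ := fun X => f ⁻¹' {d : D | d.1.filter (· ∈ X) ∈ d.2}
  have indep : ∀ P N : Set (Set Γ), P.Finite → N.Finite →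
      (∀ X ∈ P, ∀ Y ∈ N, X ≠ Y) → ∀ α : Γ,
      ∃ β, α ≤ β ∧ (∀ X ∈ P, β ∈ B X) ∧ (∀ Y ∈ N, β ∉ B Y) := by
    intro P N hP hN hPN α
    have hw : ∀ X Y : Set Γ, ∃ γ : Γ, X ≠ Y → (γ ∈ X ↔ γ ∉ Y) := by
      intro X Y
      rcases Classical.em (X = Y) with h | h
      · exact ⟨Classical.arbitrary Γ, fun c => absurd h c⟩
      · have hex : ∃ γ, ¬(γ ∈ X ↔ γ ∈ Y) := by
          by_contra hc
          push_neg at hc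
          exact h (Set.ext hc)
        obtain ⟨γ, hγ⟩ := hex
        exact ⟨γ, fun _ => by tauto⟩
    choose w hwspec using hw
    let s : Finset Γ := ((hP.prod hN).image (fun q : Set Γ × Set Γ => w q.1 q.2)).toFinset
    let A : Finset (Finset Γ) := (hP.image (fun X : Set Γ => s.filter (· ∈ X))).toFinset
    obtain ⟨β, hβ1, hβ2⟩ := hf (s, A) α
    refine ⟨β, hβ1, ?_, ?_⟩
    · intro X hX
      show (f β).1.filter (· ∈ X) ∈ (f β).2
      rw [hβ2]
      show s.filter (· ∈ X) ∈ A
      rw [Set.Finite.mem_toFinset]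
      exact Set.mem_image_of_mem _ hX
    · intro Y hY hc
      have hc' : (f β).1.filter (· ∈ Y) ∈ (f β).2 := hc
      rw [hβ2] at hc'
      have hmem : s.filter (· ∈ Y) ∈ A := hc'
      rw [Set.Finite.mem_toFinset] at hmem
      obtain ⟨X, hX, heq⟩ := hmem
      have hγs : w X Y ∈ s := by
        rw [Set.Finite.mem_toFinset]
        exact ⟨(X, Y), ⟨hX, hY⟩, rfl⟩
      have hiff := hwspec X Y (hPN X hX Y hY)
      have h1 : w X Y ∈ s.filter (· ∈ X) ↔ w X Y ∈ s.filter (· ∈ Y) := by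
        beta_reduce at heq
        rw [heq]
      simp only [Finset.mem_filter] at h1
      tauto
  -- for every ε there is an ultrafilter realizing it
  have main : ∀ ε : Set (Set Γ), ∃ p : Ultrafilter Γ,
      (∀ α : Γ, {β : Γ | α ≤ β} ∈ p) ∧ (∀ X ∈ ε, B X ∈ p) ∧ (∀ X ∉ ε, (B X)ᶜ ∈ p) := by
    intro ε
    set 𝒮 : Set (Set Γ) := {u | (∃ X ∈ ε, B X = u) ∨ (∃ X, X ∉ ε ∧ (B X)ᶜ = u) ∨
      (∃ α : Γ, {β : Γ | α ≤ β} = u)} with h𝒮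
    have hne : (Filter.generate 𝒮).NeBot := by
      rw [Filter.generate_neBot_iff]
      intro t hts htf
      let P : Set (Set Γ) := ⋃ u ∈ t, (if h : ∃ X ∈ ε, B X = u then {h.choose} else ∅)
      let N : Set (Set Γ) := ⋃ u ∈ t, (if h : ∃ X, X ∉ ε ∧ (B X)ᶜ = u then {h.choose} else ∅)
      let As : Set Γ := ⋃ u ∈ t, (if h : ∃ α : Γ, {β : Γ | α ≤ β} = u then {h.choose} else ∅)
      have hPfin : P.Finite := htf.biUnion (fun u _ => by split_ifs <;> simp)
      have hNfin : N.Finite := htf.biUnion (fun u _ => by split_ifs <;> simp)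
      have hAsfin : As.Finite := htf.biUnion (fun u _ => by split_ifs <;> simp)
      have hPmem : ∀ X ∈ P, X ∈ ε := by
        intro X hX
        simp only [P, Set.mem_iUnion] at hX
        obtain ⟨u, hu, hX⟩ := hX
        split_ifs at hX with h
        · rw [Set.mem_singleton_iff] at hX
          exact hX ▸ h.choose_spec.1
        · exact absurd hX (Set.notMem_empty X)
      have hNmem : ∀ Y ∈ N, Y ∉ ε := by
        intro Y hY
        simp only [N, Set.mem_iUnion] at hY
        obtain ⟨u, hu, hY⟩ := hY
        split_ifs at hY with h
        · rw [Set.mem_singleton_iff] at hY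
          exact hY ▸ h.choose_spec.1
        · exact absurd hY (Set.notMem_empty Y)
      have hPN : ∀ X ∈ P, ∀ Y ∈ N, X ≠ Y :=
        fun X hX Y hY c => (hNmem Y hY) (c ▸ hPmem X hX)
      obtain ⟨α0, hα0⟩ := Finset.exists_le hAsfin.toFinset
      obtain ⟨β, hβle, hβP, hβN⟩ := indep P N hPfin hNfin hPN α0
      refine ⟨β, ?_⟩
      intro u hu
      rcases hts hu with ⟨X, hX, rfl⟩ | ⟨X, hX, rfl⟩ | ⟨a, rfl⟩
      · have h : ∃ X' ∈ ε, B X' = B X := ⟨X, hX, rfl⟩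
        have hcm : h.choose ∈ P := by
          simp only [P, Set.mem_iUnion]
          exact ⟨B X, hu, by rw [dif_pos h]; exact Set.mem_singleton _⟩
        have hb := hβP h.choose hcm
        rwa [h.choose_spec.2] at hb
      · have h : ∃ X', X' ∉ ε ∧ (B X')ᶜ = (B X)ᶜ := ⟨X, hX, rfl⟩
        have hcm : h.choose ∈ N := by
          simp only [N, Set.mem_iUnion]
          exact ⟨(B X)ᶜ, hu, by rw [dif_pos h]; exact Set.mem_singleton _⟩
        have hb := hβN h.choose hcm
        have hbc : β ∈ (B h.choose)ᶜ := hb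
        rwa [h.choose_spec.2] at hbc
      · have h : ∃ α' : Γ, {β : Γ | α' ≤ β} = {β : Γ | a ≤ β} := ⟨a, rfl⟩
        have hcm : h.choose ∈ As := by
          simp only [As, Set.mem_iUnion]
          exact ⟨{β : Γ | a ≤ β}, hu, by rw [dif_pos h]; exact Set.mem_singleton _⟩
        have hle : h.choose ≤ α0 := hα0 _ (hAsfin.mem_toFinset.mpr hcm)
        have hb : β ∈ {x : Γ | h.choose ≤ x} := le_trans hle hβle
        rwa [h.choose_spec] at hb
    have := hne
    obtain ⟨p, hp⟩ := Ultrafilter.exists_le (Filter.generate 𝒮)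
    refine ⟨p, fun α => hp (Filter.mem_generate_of_mem (Or.inr (Or.inr ⟨α, rfl⟩))),
      fun X hX => hp (Filter.mem_generate_of_mem (Or.inl ⟨X, hX, rfl⟩)),
      fun X hX => hp (Filter.mem_generate_of_mem (Or.inr (Or.inl ⟨X, hX, rfl⟩)))⟩
  -- lower bound
  have hlb : (2:Cardinal) ^ ((2:Cardinal) ^ #Γ) ≤ #{p : Ultrafilter Γ // ∀ α : Γ, {β : Γ | α ≤ β} ∈ p} := by
    choose p hp1 hp2 hp3 using main
    have hinj : Function.Injective
        (fun ε : Set (Set Γ) => (⟨p ε, hp1 ε⟩ :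
          {p : Ultrafilter Γ // ∀ α : Γ, {β : Γ | α ≤ β} ∈ p})) := by
      intro ε ε' h
      simp only [Subtype.mk.injEq] at h
      by_contra hne
      obtain ⟨X, hX⟩ : ∃ X, ¬(X ∈ ε ↔ X ∈ ε') := by
        by_contra hc
        push_neg at hc
        exact hne (Set.ext fun X => hc X)
      rcases Classical.em (X ∈ ε) with hx | hx
      · have h1 : B X ∈ p ε := hp2 ε X hx
        have h2 : (B X)ᶜ ∈ p ε := h ▸ hp3 ε' X (fun c => hX ⟨fun _ => c, fun _ => hx⟩)
        exact (Ultrafilter.compl_mem_iff_notMem.mp h2) h1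
      · have hx' : X ∈ ε' := by tauto
        have h1 : B X ∈ p ε := h ▸ hp2 ε' X hx'
        have h2 : (B X)ᶜ ∈ p ε := hp3 ε X hx
        exact (Ultrafilter.compl_mem_iff_notMem.mp h2) h1
    calc (2 : Cardinal) ^ ((2 : Cardinal) ^ #Γ) = #(Set (Set Γ)) := by
          rw [Cardinal.mk_set, Cardinal.mk_set]
    _ ≤ _ := Cardinal.mk_le_of_injective hinj
  exact le_antisymm hub hlb
end

section
/- Let G be a group such that for every finite symmetric subset J ⊆ G containing the identity, the growth is subexponential: (#(Jⁿ))^(1/n) → 1 as n → ∞, where Jⁿ is the set of n-fold products of elements of J. Then G satisfies the discrete Følner condition: for every finite K ⊆ G and every ε > 0 there exists a finite nonempty F ⊆ G such that #(kF △ F) < ε·#F for every k ∈ K. -/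
open Pointwise Filter

/-- If every finite symmetric subset `J ⊆ G` containing the identity
has subexponential growth, i.e. `(#(Jⁿ))^(1/n) → 1`, then `G` satisfies the discrete
Følner condition. -/
theorem statement14 {G : Type*} [Group G] [DecidableEq G]
    (hgrowth : ∀ J : Finset G, (1 : G) ∈ J → (∀ g ∈ J, g⁻¹ ∈ J) →
      Tendsto (fun n : ℕ => ((J ^ n).card : ℝ) ^ ((1 : ℝ) / n)) atTop (nhds 1))
    (K : Finset G) (ε : ℝ) (hε : 0 < ε) :
    ∃ F : Finset G, F.Nonempty ∧
      ∀ k ∈ K, ((symmDiff (k • F) F).card : ℝ) < ε * F.card := by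
  classical
  set J : Finset G := insert 1 (K ∪ K⁻¹) with hJ
  have h1 : (1 : G) ∈ J := Finset.mem_insert_self _ _
  have hsymm : ∀ g ∈ J, g⁻¹ ∈ J := by
    intro g hg
    simp only [hJ, Finset.mem_insert, Finset.mem_union, Finset.mem_inv] at hg ⊢
    rcases hg with h | h | h
    · left; simp [h]
    · right; right; exact ⟨g, h, rfl⟩
    · obtain ⟨b, hb, rfl⟩ := h
      right; left; simpa using hb
  have hKJ : ∀ k ∈ K, k ∈ J := fun k hk =>
    Finset.mem_insert_of_mem (Finset.mem_union_left _ hk)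
  have htend := hgrowth J h1 hsymm
  set c : ℝ := 1 + ε / 2 with hc
  have hc1 : 1 < c := by simp [hc]; linarith
  have hc0 : 0 < c := lt_trans one_pos hc1
  -- one is in every power of J
  have hone : ∀ n : ℕ, (1 : G) ∈ J ^ n := by
    intro n
    induction n with
    | zero => simp
    | succ n ih =>
      rw [pow_succ]
      simpa using Finset.mul_mem_mul ih h1
  -- J ^ n ⊆ J ^ (n+1)
  have hmono : ∀ n : ℕ, J ^ n ⊆ J ^ (n + 1) := by
    intro n x hx
    rw [pow_succ]
    simpa using Finset.mul_mem_mul hx h1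
  -- key: some step has small growth
  have key : ∃ n : ℕ, ((J ^ (n + 1)).card : ℝ) < c * (J ^ n).card := by
    by_contra hcon
    push_neg at hcon
    have hlow : ∀ n : ℕ, c ^ n ≤ ((J ^ n).card : ℝ) := by
      intro n
      induction n with
      | zero => simp
      | succ n ih =>
        calc c ^ (n + 1) = c * c ^ n := by ring
          _ ≤ c * (J ^ n).card := by nlinarith
          _ ≤ ((J ^ (n + 1)).card : ℝ) := hcon n
    have hev : ∀ᶠ n : ℕ in atTop, ((J ^ n).card : ℝ) ^ ((1 : ℝ) / n) < c :=
      htend.eventually (gt_mem_nhds hc1)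
    obtain ⟨n, hlt, hn1⟩ := (hev.and (eventually_ge_atTop 1)).exists
    have hn0 : (n : ℝ) ≠ 0 := by exact_mod_cast Nat.one_le_iff_ne_zero.mp hn1
    have heq : ((c ^ n : ℝ)) ^ ((1 : ℝ) / n) = c := by
      rw [← Real.rpow_natCast c n, ← Real.rpow_mul hc0.le]
      rw [mul_one_div, div_self hn0, Real.rpow_one]
    have hle : c ≤ ((J ^ n).card : ℝ) ^ ((1 : ℝ) / n) := by
      rw [← heq]
      exact Real.rpow_le_rpow (by positivity) (hlow n) (by positivity)
    exact absurd hlt (not_lt.mpr hle)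
  obtain ⟨n, hn⟩ := key
  refine ⟨J ^ n, ⟨1, hone n⟩, ?_⟩
  intro k hk
  have hkJ : k ∈ J := hKJ k hk
  -- k • J^n ⊆ J^(n+1)
  have hsub : k • J ^ n ⊆ J ^ (n + 1) := by
    intro x hx
    obtain ⟨y, hy, rfl⟩ := Finset.mem_smul_finset.mp hx
    rw [pow_succ']
    exact Finset.mul_mem_mul hkJ hy
  have hsdiff : (k • J ^ n) \ (J ^ n) ⊆ (J ^ (n + 1)) \ (J ^ n) :=
    Finset.sdiff_subset_sdiff hsub le_rfl
  have hcard1 : ((k • J ^ n) \ (J ^ n)).card ≤ (J ^ (n + 1)).card - (J ^ n).card := by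
    calc ((k • J ^ n) \ (J ^ n)).card ≤ ((J ^ (n + 1)) \ (J ^ n)).card :=
          Finset.card_le_card hsdiff
      _ = (J ^ (n + 1)).card - (J ^ n).card := Finset.card_sdiff_of_subset (hmono n)
  have hcards : (k • J ^ n).card = (J ^ n).card := Finset.card_smul_finset k _
  have hsymmcard : (symmDiff (k • J ^ n) (J ^ n)).card
      = 2 * ((k • J ^ n) \ (J ^ n)).card := by
    rw [symmDiff_def, Finset.sup_eq_union,
      Finset.card_union_of_disjoint disjoint_sdiff_sdiff,
      Finset.card_sdiff_comm hcards]
    ring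
  have hle2 : ((symmDiff (k • J ^ n) (J ^ n)).card : ℝ)
      ≤ 2 * (((J ^ (n + 1)).card : ℝ) - (J ^ n).card) := by
    rw [hsymmcard]
    push_cast
    have h1' : (((k • J ^ n) \ (J ^ n)).card : ℝ)
        ≤ ((J ^ (n + 1)).card : ℝ) - (J ^ n).card := by
      have h2 := (Nat.cast_le (α := ℝ)).mpr hcard1
      rwa [Nat.cast_sub (Finset.card_le_card (hmono n))] at h2
    linarith
  have hpos : (0 : ℝ) < (J ^ n).card := by
    have : 0 < (J ^ n).card := Finset.card_pos.mpr ⟨1, hone n⟩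
    exact_mod_cast this
  calc ((symmDiff (k • J ^ n) (J ^ n)).card : ℝ)
      ≤ 2 * (((J ^ (n + 1)).card : ℝ) - (J ^ n).card) := hle2
    _ < 2 * (c * (J ^ n).card - (J ^ n).card) := by linarith
    _ = ε * (J ^ n).card := by rw [hc]; ring
end

section
/- There exists a finitely additive, rotation-invariant normalized set function on the Borel subsets of the circle group 𝕋 = ℝ/ℤ that differs from Lebesgue measure. Precisely, there is a function m assigning to each Borel set E ⊆ 𝕋 a value m(E) ∈ [0,1], with m(𝕋) = 1, m(E ∪ F) = m(E) + m(F) whenever E, F are disjoint Borel sets, m(x + E) = m(E) for every x ∈ 𝕋 and Borel E, and such that m(E) = 1 for some Borel set E of Lebesgue (Haar) measure zero. In particular, countable additivity is not a redundant axiom in Lebesgue's definition of the integral. -/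
/-!
An abelian group `G` carries an invariant mean: the zero functional extends, by Hahn–Banach,
to a linear functional on bounded functions dominated by Dixmier's sublinear functional
`f ↦ inf_g sup_x (average of f (x + gᵢ))`, the infimum over finite families `g`. Averaging
along `0, y, …, (n - 1) • y` telescopes, so `f (· + y) - f` has upper mean `≤ 0`, which gives
invariance. Evaluating on indicators gives a translation-invariant finitely additive probability
`ν` on all subsets of `G`.

On the circle, a dense Gδ null set `E` exists, and by Baire's theorem its translates have the
finite intersection property, so one ultrafilter `U` contains all of them. Since
`A ↦ {x | x + A ∈ U}` is a Boolean homomorphism commuting with translations,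
`m A = ν {x | x + A ∈ U}` is finitely additive and invariant, while `m E = ν univ = 1`.
-/

open Set

def boundedFunctions (α : Type*) : Submodule ℝ (α → ℝ) where
  carrier := {f | ∃ C, ∀ x, |f x| ≤ C}
  add_mem' := fun ⟨C, hC⟩ ⟨D, hD⟩ =>
    ⟨C + D, fun x => (abs_add_le _ _).trans (add_le_add (hC x) (hD x))⟩
  zero_mem' := ⟨0, fun x => by simp⟩
  smul_mem' := fun c f ⟨C, hC⟩ =>
    ⟨|c| * C, fun x => by
      simpa [abs_mul] using mul_le_mul_of_nonneg_left (hC x) (abs_nonneg c)⟩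

theorem indicator_one_mem_boundedFunctions {α : Type*} (s : Set α) :
    s.indicator 1 ∈ boundedFunctions α :=
  ⟨1, fun x => by by_cases hx : x ∈ s <;> simp [hx]⟩

section InvariantMean

variable {G : Type*} [AddCommGroup G] {ι κ : Type*} [Fintype ι] [Fintype κ]

noncomputable def translateAverage (g : ι → G) (f : G → ℝ) (x : G) : ℝ :=
  (∑ i, f (x + g i)) / Fintype.card ι

variable {g : ι → G} {f f₁ f₂ : G → ℝ} {B : ℝ}

theorem translateAverage_le [Nonempty ι] (h : ∀ x, f x ≤ B) (x : G) :
    translateAverage g f x ≤ B := by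
  rw [translateAverage, div_le_iff₀ (by simp [Fintype.card_pos])]
  calc ∑ i, f (x + g i) ≤ ∑ _i : ι, B := Finset.sum_le_sum fun i _ => h _
    _ = B * Fintype.card ι := by simp [mul_comm]

theorem le_translateAverage [Nonempty ι] (h : ∀ x, B ≤ f x) (x : G) :
    B ≤ translateAverage g f x := by
  rw [translateAverage, le_div_iff₀ (by simp [Fintype.card_pos])]
  calc B * Fintype.card ι = ∑ _i : ι, B := by simp [mul_comm]
    _ ≤ ∑ i, f (x + g i) := Finset.sum_le_sum fun i _ => h _

theorem abs_translateAverage_le [Nonempty ι] {C : ℝ} (h : ∀ x, |f x| ≤ C) (x : G) :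
    |translateAverage g f x| ≤ C :=
  abs_le.2 ⟨le_translateAverage (fun x => (abs_le.1 (h x)).1) x,
    translateAverage_le (fun x => (abs_le.1 (h x)).2) x⟩

theorem bddAbove_range_translateAverage [Nonempty ι] (hf : f ∈ boundedFunctions G)
    (g : ι → G) : BddAbove (range (translateAverage g f)) := by
  obtain ⟨C, hC⟩ := hf
  exact ⟨C, by rintro _ ⟨x, rfl⟩; exact (abs_le.1 (abs_translateAverage_le hC x)).2⟩

theorem translateAverage_add :
    translateAverage g (f₁ + f₂) = translateAverage g f₁ + translateAverage g f₂ := by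
  ext x
  simp [translateAverage, Finset.sum_add_distrib, add_div]

theorem translateAverage_smul (c : ℝ) :
    translateAverage g (c • f) = c • translateAverage g f := by
  ext x
  simp [translateAverage, ← Finset.mul_sum, mul_div_assoc]

theorem translateAverage_prod (a : ι → G) (b : κ → G) :
    translateAverage (fun p : ι × κ => a p.1 + b p.2) f
      = translateAverage b (translateAverage a f) := by
  ext x
  simp only [translateAverage, Fintype.card_prod, Nat.cast_mul, Fintype.sum_prod_type,
    ← Finset.sum_div]
  rw [Finset.sum_comm, div_div, mul_comm]
  simp only [add_assoc, add_comm (a _)]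

theorem translateAverage_prod' (a : ι → G) (b : κ → G) :
    translateAverage (fun p : ι × κ => a p.1 + b p.2) f
      = translateAverage a (translateAverage b f) := by
  ext x
  simp only [translateAverage, Fintype.card_prod, Nat.cast_mul, Fintype.sum_prod_type,
    ← Finset.sum_div]
  rw [div_div, mul_comm]
  simp only [add_assoc]

theorem translateAverage_sub_translate (n : ℕ) (y x : G) :
    translateAverage (fun k : Fin n => (k : ℕ) • y) (fun x => f (x + y) - f x) x
      = (f (x + n • y) - f x) / n := by
  have hstep (k : ℕ) : f (x + k • y + y) = f (x + (k + 1) • y) := by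
    rw [succ_nsmul, add_assoc]
  rw [translateAverage, Fintype.card_fin,
    Fin.sum_univ_eq_sum_range (fun k => f (x + k • y + y) - f (x + k • y))]
  simp only [hstep]
  rw [Finset.sum_range_sub (fun k => f (x + k • y)), zero_nsmul, add_zero]

variable (f) in
noncomputable def upperMean : ℝ :=
  sInf {r | ∃ (ι : Type) (_ : Fintype ι) (_ : Nonempty ι) (g : ι → G),
    ⨆ x, translateAverage g f x = r}

theorem upperMean_le {ι : Type} [Fintype ι] [Nonempty ι] (hf : f ∈ boundedFunctions G)
    (g : ι → G) : upperMean f ≤ ⨆ x, translateAverage g f x := by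
  obtain ⟨C, hC⟩ := id hf
  refine csInf_le ⟨-C, ?_⟩ ⟨ι, inferInstance, inferInstance, g, rfl⟩
  rintro _ ⟨κ, _, _, b, rfl⟩
  exact (abs_le.1 (abs_translateAverage_le hC 0)).1.trans
    (le_ciSup (bddAbove_range_translateAverage hf b) 0)

theorem upperMean_le_of_forall_le (hf : f ∈ boundedFunctions G) (h : ∀ x, f x ≤ B) :
    upperMean f ≤ B :=
  (upperMean_le hf fun _ : Unit => 0).trans (ciSup_le (translateAverage_le h))

theorem upperMean_smul {c : ℝ} (hc : 0 ≤ c) : upperMean (c • f) = c * upperMean f := by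
  have hsup {ι : Type} [Fintype ι] (g : ι → G) :
      ⨆ x, translateAverage g (c • f) x = c • ⨆ x, translateAverage g f x := by
    simp [translateAverage_smul, Real.mul_iSup_of_nonneg hc]
  rw [upperMean, upperMean, ← smul_eq_mul, ← Real.sInf_smul_of_nonneg hc]
  congr 1
  ext r
  simp only [mem_ofPred_eq, mem_smul_set]
  constructor
  · rintro ⟨ι, hι, hne, g, rfl⟩
    exact ⟨_, ⟨ι, hι, hne, g, rfl⟩, (hsup g).symm⟩
  · rintro ⟨_, ⟨ι, hι, hne, g, rfl⟩, rfl⟩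
    exact ⟨ι, hι, hne, g, hsup g⟩

theorem upperMean_zero : upperMean (0 : G → ℝ) = 0 := by
  have h := upperMean_smul (f := (0 : G → ℝ)) zero_le_two
  rw [smul_zero] at h
  linarith

theorem upperMean_add_le (hf₁ : f₁ ∈ boundedFunctions G)
    (hf₂ : f₂ ∈ boundedFunctions G) : upperMean (f₁ + f₂) ≤ upperMean f₁ + upperMean f₂ := by
  have key {ι κ : Type} [Fintype ι] [Nonempty ι] [Fintype κ] [Nonempty κ]
      (a : ι → G) (b : κ → G) : upperMean (f₁ + f₂)
        ≤ (⨆ x, translateAverage a f₁ x) + ⨆ x, translateAverage b f₂ x := by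
    refine (upperMean_le (add_mem hf₁ hf₂) fun p : ι × κ => a p.1 + b p.2).trans
      (ciSup_le fun x => ?_)
    rw [translateAverage_add, Pi.add_apply, translateAverage_prod, translateAverage_prod']
    exact add_le_add
      (translateAverage_le (le_ciSup (bddAbove_range_translateAverage hf₁ a)) x)
      (translateAverage_le (le_ciSup (bddAbove_range_translateAverage hf₂ b)) x)
  have hne (f : G → ℝ) : {r | ∃ (ι : Type) (_ : Fintype ι) (_ : Nonempty ι) (g : ι → G),
      ⨆ x, translateAverage g f x = r}.Nonempty :=
    ⟨_, Unit, inferInstance, inferInstance, fun _ => 0, rfl⟩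
  rw [← sub_le_iff_le_add]
  refine le_csInf (hne f₁) ?_
  rintro _ ⟨ι, hι, hι', a, rfl⟩
  rw [sub_le_comm]
  refine le_csInf (hne f₂) ?_
  rintro _ ⟨κ, hκ, hκ', b, rfl⟩
  rw [sub_le_iff_le_add']
  exact key a b

theorem upperMean_sub_translate_nonpos (hf : f ∈ boundedFunctions G) (y : G) :
    upperMean (fun x => f (x + y) - f x) ≤ 0 := by
  have hbdd : (fun x => f (x + y) - f x) ∈ boundedFunctions G := by
    obtain ⟨C, hC⟩ := hf
    exact ⟨C + C, fun x => (abs_sub _ _).trans (add_le_add (hC _) (hC _))⟩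
  obtain ⟨C, hC⟩ := hf
  refine le_of_forall_pos_le_add fun ε hε => ?_
  obtain ⟨n, hn⟩ := exists_nat_gt (2 * C / ε)
  refine (upperMean_le hbdd fun k : Fin (n + 1) => (k : ℕ) • y).trans (ciSup_le fun x => ?_)
  rw [translateAverage_sub_translate, zero_add, div_le_iff₀ (by positivity)]
  rw [div_lt_iff₀ hε] at hn
  have := abs_le.1 (hC (x + (n + 1) • y))
  have := abs_le.1 (hC x)
  push_cast
  nlinarith

variable (G) in
theorem exists_linearMap_le_upperMean :
    ∃ Λ : boundedFunctions G →ₗ[ℝ] ℝ, ∀ f, Λ f ≤ upperMean (f : G → ℝ) := by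
  obtain ⟨Λ, -, hΛ⟩ := exists_extension_of_le_sublinear ⟨⊥, 0⟩
    (fun f : boundedFunctions G => upperMean (f : G → ℝ))
    (fun c hc f => by rw [Submodule.coe_smul]; exact upperMean_smul hc.le)
    (fun f₁ f₂ => by rw [Submodule.coe_add]; exact upperMean_add_le f₁.2 f₂.2)
    (fun ⟨f, hf⟩ => by
      rw [Submodule.mem_bot] at hf
      subst hf
      simpa using upperMean_zero.ge)
  exact ⟨Λ, hΛ⟩

variable (G) in
theorem exists_invariantMean :
    ∃ Λ : boundedFunctions G →ₗ[ℝ] ℝ,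
      (∀ (f : boundedFunctions G) (B : ℝ), (∀ x, (f : G → ℝ) x ≤ B) → Λ f ≤ B) ∧
      (∀ (f : boundedFunctions G) (B : ℝ), (∀ x, B ≤ (f : G → ℝ) x) → B ≤ Λ f) ∧
      ∀ (y : G) (f f' : boundedFunctions G),
        (∀ x, (f' : G → ℝ) x = (f : G → ℝ) (x + y)) → Λ f' = Λ f := by
  obtain ⟨Λ, hΛ⟩ := exists_linearMap_le_upperMean G
  have hle (f : boundedFunctions G) (B : ℝ) (h : ∀ x, (f : G → ℝ) x ≤ B) : Λ f ≤ B :=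
    (hΛ f).trans (upperMean_le_of_forall_le f.2 h)
  have hsub (f f' : boundedFunctions G) (y : G)
      (h : ∀ x, (f' : G → ℝ) x = (f : G → ℝ) (x + y)) : Λ f' - Λ f ≤ 0 :=
    calc Λ f' - Λ f = Λ (f' - f) := (map_sub Λ f' f).symm
      _ ≤ upperMean ((f' - f : boundedFunctions G) : G → ℝ) := hΛ _
      _ = upperMean (fun x => (f : G → ℝ) (x + y) - (f : G → ℝ) x) := by
        congr 1
        ext x
        simp [h]
      _ ≤ 0 := upperMean_sub_translate_nonpos f.2 y
  refine ⟨Λ, hle, fun f B h => ?_, fun y f f' h => ?_⟩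
  · simpa using hle (-f) (-B) fun x => by simpa using h x
  · refine le_antisymm (sub_nonpos.1 (hsub f f' y h)) (sub_nonpos.1 (hsub f' f (-y) fun x => ?_))
    simp [h]

variable (G) in
theorem exists_finitelyAdditive_translationInvariant :
    ∃ ν : Set G → ℝ, (∀ s, 0 ≤ ν s ∧ ν s ≤ 1) ∧ ν univ = 1 ∧
      (∀ s t, Disjoint s t → ν (s ∪ t) = ν s + ν t) ∧
      ∀ (y : G) s, ν ((· + y) ⁻¹' s) = ν s := by
  obtain ⟨Λ, hle, hge, hinv⟩ := exists_invariantMean G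
  let ind (s : Set G) : boundedFunctions G :=
    ⟨s.indicator 1, indicator_one_mem_boundedFunctions s⟩
  have hind (s : Set G) (x : G) : 0 ≤ (ind s : G → ℝ) x ∧ (ind s : G → ℝ) x ≤ 1 := by
    by_cases hx : x ∈ s <;> simp [ind, hx]
  refine ⟨fun s => Λ (ind s), fun s => ⟨hge _ _ (hind s · |>.1), hle _ _ (hind s · |>.2)⟩,
    le_antisymm (hle _ _ (hind univ · |>.2)) (hge _ _ fun x => by simp [ind]),
    fun s t hst => ?_, fun y s => hinv y _ _ fun x => rfl⟩
  rw [← map_add]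
  exact congrArg Λ (Subtype.ext (indicator_union_of_disjoint hst 1))

end InvariantMean

section TranslatesMem

variable {G : Type*} [AddGroup G]

def translatesMem (U : Ultrafilter G) (A : Set G) : Set G := {x | (x + ·) '' A ∈ U}

variable {U : Ultrafilter G} {A B : Set G}

theorem translatesMem_univ : translatesMem U univ = univ :=
  eq_univ_of_forall fun x => show (x + ·) '' univ ∈ U by
    rw [image_univ_of_surjective (add_left_surjective x)]
    exact Filter.univ_mem

theorem translatesMem_union :
    translatesMem U (A ∪ B) = translatesMem U A ∪ translatesMem U B := by
  ext x
  simp [translatesMem, image_union, Ultrafilter.union_mem_iff]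

theorem disjoint_translatesMem (h : Disjoint A B) :
    Disjoint (translatesMem U A) (translatesMem U B) := by
  refine Set.disjoint_left.2 fun x hA hB => U.empty_notMem ?_
  rw [← ((disjoint_image_iff (add_right_injective x)).2 h).inter_eq]
  exact Filter.inter_mem hA hB

theorem translatesMem_image_add_left (y : G) :
    translatesMem U ((y + ·) '' A) = (· + y) ⁻¹' translatesMem U A := by
  ext x
  simp only [translatesMem, mem_ofPred_eq, mem_preimage, image_image, add_assoc]

end TranslatesMem

theorem exists_ultrafilter_forall_mem_of_isGδ_dense {X : Type*} [TopologicalSpace X]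
    [BaireSpace X] [Nonempty X] {S : Set (Set X)} (hS : ∀ s ∈ S, IsGδ s ∧ Dense s) :
    ∃ U : Ultrafilter X, ∀ s ∈ S, s ∈ U := by
  have : (Filter.generate S).NeBot := Filter.generate_neBot_iff.2 fun t hts ht =>
    (dense_sInter_of_Gδ (fun s hs => (hS s (hts hs)).1) ht.countable
      (fun s hs => (hS s (hts hs)).2)).nonempty
  obtain ⟨U, hU⟩ := Ultrafilter.exists_le (Filter.generate S)
  exact ⟨U, fun s hs => hU (Filter.mem_generate_of_mem hs)⟩

open MeasureTheory
open scoped ENNReal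

theorem exists_isGδ_dense_measure_zero {X : Type*} [TopologicalSpace X]
    [TopologicalSpace.SeparableSpace X] [MeasurableSpace X] (μ : Measure X) [μ.OuterRegular]
    [NullSingletonClass μ] : ∃ s : Set X, IsGδ s ∧ Dense s ∧ μ s = 0 := by
  obtain ⟨D, hDc, hDd⟩ := TopologicalSpace.exists_countable_dense X
  have hV (n : ℕ) : ∃ V ⊇ D, IsOpen V ∧ μ V < (n : ℝ≥0∞)⁻¹ :=
    D.exists_isOpen_lt_of_lt _ (by simp [hDc.measure_zero μ])
  choose V hDV hVo hVμ using hV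
  refine ⟨⋂ n, V n, .iInter_of_isOpen hVo, hDd.mono (subset_iInter hDV), ?_⟩
  exact le_antisymm (ge_of_tendsto' ENNReal.tendsto_inv_nat_nhds_zero fun n =>
    (measure_mono (iInter_subset V n)).trans (hVμ n).le) zero_le

instance AddCircle.nullSingletonClass_volume (T : ℝ) [Fact (0 < T)] :
    NullSingletonClass (volume : Measure (AddCircle T)) := by
  refine ⟨fun x => le_antisymm (ENNReal.le_of_forall_pos_le_add fun ε hε _ => ?_) zero_le⟩
  calc volume {x} ≤ volume (Metric.closedBall x (ε / 2)) :=
        measure_mono (singleton_subset_iff.2 (Metric.mem_closedBall_self (by positivity)))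
    _ = ENNReal.ofReal (min T (2 * (ε / 2))) := AddCircle.volume_closedBall _ _
    _ ≤ 0 + ε := by
      rw [zero_add, mul_div_cancel₀ _ two_ne_zero]
      exact (ENNReal.ofReal_le_ofReal (min_le_right _ _)).trans (by simp)

/-- There is a finitely additive, rotation-invariant, normalized set
function on the Borel subsets of the circle group `𝕋 = ℝ/ℤ` assigning value `1` to some
set of Haar (Lebesgue) measure zero; in particular it differs from Lebesgue measure, so
countable additivity is not a redundant axiom in Lebesgue's definition of the integral. -/
theorem statement16 :
    ∃ m : Set UnitAddCircle → ℝ,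
      (∀ E : Set UnitAddCircle, MeasurableSet E → 0 ≤ m E ∧ m E ≤ 1) ∧
      m Set.univ = 1 ∧
      (∀ E F : Set UnitAddCircle, MeasurableSet E → MeasurableSet F → Disjoint E F →
        m (E ∪ F) = m E + m F) ∧
      (∀ (x : UnitAddCircle) (E : Set UnitAddCircle), MeasurableSet E →
        m ((fun t => x + t) '' E) = m E) ∧
      ∃ E : Set UnitAddCircle, MeasurableSet E ∧ volume E = 0 ∧ m E = 1 := by
  obtain ⟨E, hEGδ, hEdense, hEnull⟩ :=
    exists_isGδ_dense_measure_zero (volume : Measure UnitAddCircle)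
  obtain ⟨U, hU⟩ := exists_ultrafilter_forall_mem_of_isGδ_dense
    (S := range fun x : UnitAddCircle => (x + ·) '' E) <| forall_mem_range.2 fun x => by
      rw [image_add_left]
      exact ⟨hEGδ.preimage (continuous_const_add _), hEdense.preimage (isOpenMap_add_left _)⟩
  obtain ⟨ν, hν01, hνuniv, hνadd, hνinv⟩ :=
    exists_finitelyAdditive_translationInvariant UnitAddCircle
  have hE : translatesMem U E = univ := eq_univ_of_forall fun x => hU _ ⟨x, rfl⟩
  refine ⟨fun A => ν (translatesMem U A), fun A _ => hν01 _,
    by simp only [translatesMem_univ, hνuniv],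
    fun A B _ _ hAB => by simp only [translatesMem_union, hνadd _ _ (disjoint_translatesMem hAB)],
    fun x A _ => by simp only [translatesMem_image_add_left, hνinv],
    E, hEGδ.measurableSet, hEnull, by simp only [hE, hνuniv]⟩
end

section
/- Let G be a nondiscrete, σ-compact, locally compact Hausdorff group with left Haar measure μ. Then for every ε > 0 there exists a dense open set E ⊆ G with μ(E) ≤ ε. -/
open MeasureTheory Measure Set Filter Topology
open scoped Pointwise ENNReal

/-!
Nondiscreteness makes `μ {1} = 0`, so there are open neighbourhoods `U n` of `1` with
`μ (U n) ≤ δ n`, where `∑ δ n ≤ ε`, and with `closure (U (n + 1)) ⊆ U n` compact. Then every open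
set containing the compact set `N := ⋂ closure (U n)` contains some `U n`. By σ-compactness a
countable set `D = {d₀, d₁, …}` satisfies `D * U n = G` for every `n`, which forces `D * N` to be
dense; and `D * N` lies in the open set `⋃ dₖ • U k`, whose measure is at most `∑ δ k ≤ ε`.
-/

section TopologicalGroup

variable {G : Type*} [Group G] [TopologicalSpace G] [IsTopologicalGroup G]

theorem dense_mul_of_forall_mul_eq_univ {ι : Type*} {U : ι → Set G} {D N : Set G}
    (hD : ∀ i, D * U i = univ) (hN : ∀ O, IsOpen O → N ⊆ O → ∃ i, U i ⊆ O) :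
    Dense (D * N) := by
  refine dense_iff_inter_open.2 fun O hO ⟨g, hg⟩ => ?_
  -- `g = d * u` with `u` close enough to `N` that `d * ν = g * u⁻¹ * ν ∈ O` for some `ν ∈ N`
  set W : Set G := ⋃ ν ∈ N, (fun u => g * u⁻¹ * ν) ⁻¹' O
  have hW : IsOpen W := isOpen_biUnion fun ν _ => hO.preimage (by fun_prop)
  have hNW : N ⊆ W := fun ν hν => mem_biUnion hν (by simpa using hg)
  obtain ⟨i, hiW⟩ := hN W hW hNW
  obtain ⟨d, hd, u, hu, rfl⟩ : g ∈ D * U i := hD i ▸ mem_univ g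
  obtain ⟨ν, hν, hdν⟩ := mem_iUnion₂.1 (hiW hu)
  exact ⟨d * ν, by simpa using hdν, mul_mem_mul hd hν⟩

theorem exists_countable_forall_mul_eq_univ [SigmaCompactSpace G] {ι : Type*} [Countable ι]
    {U : ι → Set G} (hU : ∀ i, U i ∈ 𝓝 1) : ∃ D : Set G, D.Countable ∧ ∀ i, D * U i = univ := by
  choose D hDc hD using fun i =>
    countable_cover_nhds_of_sigmaCompact fun x : G => smul_mem_nhds_self.2 (hU i)
  refine ⟨⋃ i, D i, countable_iUnion hDc, fun i => eq_univ_of_univ_subset ?_⟩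
  rw [← hD i, ← iUnion_mul_left_image]
  exact biUnion_mono (subset_iUnion D i) fun _ _ => le_rfl

end TopologicalGroup

theorem exists_subset_of_closure_succ_subset {X : Type*} [TopologicalSpace X] [T2Space X]
    {U : ℕ → Set X} (hU : ∀ n, IsCompact (closure (U n)))
    (hsucc : ∀ n, closure (U (n + 1)) ⊆ U n) {O : Set X} (hO : IsOpen O)
    (hNO : ⋂ n, closure (U n) ⊆ O) : ∃ n, U n ⊆ O := by
  have hanti : Antitone fun n => closure (U n) :=
    antitone_nat_of_succ_le fun n => (hsucc n).trans subset_closure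
  obtain ⟨n, hn⟩ := exists_subset_nhds_of_isCompact hanti.directed_ge hU
    fun x hx => hO.mem_nhds (hNO hx)
  exact ⟨n, subset_closure.trans hn⟩

section Haar

variable {G : Type*} [Group G] [TopologicalSpace G] [IsTopologicalGroup G]
  [LocallyCompactSpace G] [T2Space G] [MeasurableSpace G] [BorelSpace G]
  [(𝓝[≠] (1 : G)).NeBot] (μ : Measure G) [μ.IsHaarMeasure]

theorem exists_isOpen_one_mem_measure_le {δ : ℝ≥0∞} (hδ : δ ≠ 0) :
    ∃ W : Set G, IsOpen W ∧ (1 : G) ∈ W ∧ μ W ≤ δ := by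
  -- `haar` is outer regular and `μ` agrees with a multiple `c • haar` on open sets
  set c : ℝ≥0∞ := (haarScalarFactor μ haar : ℝ≥0∞)
  have hpos : 0 < δ / c := ENNReal.div_pos hδ ENNReal.coe_ne_top
  obtain ⟨W, hW1, hWo, hWlt⟩ := Set.exists_isOpen_lt_of_lt (μ := haar) {(1 : G)} (δ / c)
    (by rwa [measure_singleton])
  refine ⟨W, hWo, hW1 rfl, ?_⟩
  calc μ W = c * haar W := measure_isHaarMeasure_eq_smul_of_isOpen μ haar hWo
    _ ≤ c * (δ / c) := mul_le_mul_right hWlt.le c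
    _ ≤ δ := ENNReal.mul_div_le

theorem exists_isOpen_closure_subset_measure_le {U : Set G} (hU : IsOpen U) (h1U : (1 : G) ∈ U)
    {δ : ℝ≥0∞} (hδ : δ ≠ 0) :
    ∃ V : Set G, IsOpen V ∧ (1 : G) ∈ V ∧ IsCompact (closure V) ∧ closure V ⊆ U ∧ μ V ≤ δ := by
  obtain ⟨W, hWo, hW1, hWμ⟩ := exists_isOpen_one_mem_measure_le μ hδ
  obtain ⟨V, hVo, h1V, hVUW, hVc⟩ := exists_open_between_and_isCompact_closure
    isCompact_singleton (hU.inter hWo) (singleton_subset_iff.2 ⟨h1U, hW1⟩)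
  refine ⟨V, hVo, h1V rfl, hVc, fun x hx => (hVUW hx).1, ?_⟩
  exact (measure_mono fun x hx => (hVUW (subset_closure hx)).2).trans hWμ

theorem exists_seq_closure_succ_subset_measure_le {δ : ℕ → ℝ≥0∞} (hδ : ∀ n, δ n ≠ 0) :
    ∃ U : ℕ → Set G, ∀ n, IsOpen (U n) ∧ (1 : G) ∈ U n ∧ IsCompact (closure (U n)) ∧
      closure (U (n + 1)) ⊆ U n ∧ μ (U n) ≤ δ n := by
  let S := {W : Set G // IsOpen W ∧ (1 : G) ∈ W}
  have step (n : ℕ) (W : S) :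
      ∃ V : S, IsCompact (closure V.1) ∧ closure V.1 ⊆ W.1 ∧ μ V.1 ≤ δ n := by
    obtain ⟨V, hVo, h1V, hV⟩ := exists_isOpen_closure_subset_measure_le μ W.2.1 W.2.2 (hδ n)
    exact ⟨⟨V, hVo, h1V⟩, hV⟩
  choose next hnext using step
  let U : ℕ → S := fun n =>
    Nat.rec (next 0 ⟨univ, isOpen_univ, mem_univ 1⟩) (fun n W => next (n + 1) W) n
  have hU : ∀ n, IsCompact (closure (U n).1) ∧ μ (U n).1 ≤ δ n := by
    rintro (_ | n) <;> exact ⟨(hnext _ _).1, (hnext _ _).2.2⟩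
  exact ⟨fun n => (U n).1, fun n =>
    ⟨(U n).2.1, (U n).2.2, (hU n).1, (hnext (n + 1) (U n)).2.1, (hU n).2⟩⟩

end Haar

/-- In a nondiscrete σ-compact locally compact Hausdorff group with
left Haar measure `μ`, for every `ε > 0` there is a dense open set of measure at most
`ε`. -/
theorem statement19 {G : Type*} [Group G] [TopologicalSpace G] [IsTopologicalGroup G]
    [LocallyCompactSpace G] [T2Space G] [SigmaCompactSpace G]
    [MeasurableSpace G] [BorelSpace G]
    (μ : Measure G) [μ.IsHaarMeasure]
    (hnd : ¬ DiscreteTopology G)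
    (ε : ℝ) (hε : 0 < ε) :
    ∃ E : Set G, IsOpen E ∧ Dense E ∧ μ E ≤ ENNReal.ofReal ε := by
  have : (𝓝[≠] (1 : G)).NeBot := by
    rw [neBot_iff, Ne, ← isOpen_singleton_iff_punctured_nhds,
      ← discreteTopology_iff_isOpen_singleton_one]
    exact hnd
  obtain ⟨δ, hδ0, hδε⟩ := ENNReal.exists_pos_sum_of_countable' (ENNReal.ofReal_pos.2 hε).ne' ℕ
  obtain ⟨U, hU⟩ := exists_seq_closure_succ_subset_measure_le μ fun n => (hδ0 n).ne'
  set N := ⋂ n, closure (U n)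
  have hNU (n : ℕ) : N ⊆ U n := (iInter_subset _ (n + 1)).trans (hU n).2.2.2.1
  obtain ⟨D, hDc, hD⟩ := exists_countable_forall_mul_eq_univ fun n => (hU n).1.mem_nhds (hU n).2.1
  obtain ⟨f, rfl⟩ := hDc.exists_eq_range (hD 0 ▸ univ_nonempty).of_mul_left
  have hdense : Dense (range f * N) := dense_mul_of_forall_mul_eq_univ hD fun O hO hNO =>
    exists_subset_of_closure_succ_subset (fun n => (hU n).2.2.1) (fun n => (hU n).2.2.2.1) hO hNO
  refine ⟨⋃ k, f k • U k, isOpen_iUnion fun k => (hU k).1.smul _, hdense.mono ?_, ?_⟩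
  · rintro _ ⟨_, ⟨k, rfl⟩, ν, hν, rfl⟩
    exact mem_iUnion.2 ⟨k, smul_mem_smul_set (hNU k hν)⟩
  · calc μ (⋃ k, f k • U k) ≤ ∑' k, μ (f k • U k) := measure_iUnion_le _
      _ ≤ ∑' k, δ k := ENNReal.tsum_le_tsum fun k => (measure_smul μ _ _).trans_le (hU k).2.2.2.2
      _ ≤ ENNReal.ofReal ε := hδε.le
end
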